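/- arXiv:math/0604080 — 4 statements merged into one kernel-verified Lean document; each statement's English description precedes it below -/
import Mathlib

section
/- For 0 ≤ l < k ≤ n, the Newton-MacLaurin inequality holds: k(n-l+1)·σ_{l-1}(λ)·σ_k(λ) ≤ l(n-k+1)·σ_l(λ)·σ_{k-1}(λ) for all λ in the positive k-cone Γ⁺_k. -/
open Finset

noncomputable def esymm (n k : ℕ) (lam : Fin n → ℝ) : ℝ :=
  ∑ s ∈ Finset.univ.powersetCard k, ∏ i ∈ s, lam i

/-- σ with integer index: σ_k = 0 for k < 0. -/
noncomputable def esymmZ (n : ℕ) (k : ℤ) (lam : Fin n → ℝ) : ℝ :=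
  if 0 ≤ k then esymm n k.toNat lam else 0

def gammaPlus (n k : ℕ) : Set (Fin n → ℝ) :=
  {lam | ∀ i, 1 ≤ i → i ≤ k → 0 < esymm n i lam}

open Polynomial in
lemma NM.splits_derivative {p : ℝ[X]} (hp : p.Splits) :
    (derivative p).Splits := by
  rcases eq_or_ne (derivative p) 0 with h | h
  · rw [h]; exact Splits.zero
  have hp0 : p ≠ 0 := by rintro rfl; simp at h
  have hd : p.natDegree ≠ 0 := by
    intro h0
    exact h (by rw [eq_C_of_natDegree_eq_zero h0, derivative_C])
  rw [splits_iff_card_roots] at hp ⊢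
  have h1 := p.card_roots_le_derivative
  have h2 := (derivative p).card_roots'
  have h3 := p.natDegree_derivative_le
  omega

open Polynomial in
lemma NM.splits_iterate_derivative {p : ℝ[X]} (hp : p.Splits) (t : ℕ) :
    (derivative^[t] p).Splits := by
  induction t with
  | zero => exact hp
  | succ t ih => rw [Function.iterate_succ_apply']; exact NM.splits_derivative ih

open Polynomial in
lemma NM.splits_reverse {p : ℝ[X]} (hp : p.Splits) :
    p.reverse.Splits := by
  have key : ∀ M : Multiset ℝ, ((M.map fun a => X - C a).prod).reverse.Splits := by
    intro M
    induction M using Multiset.induction with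
    | empty =>
      exact Splits.of_natDegree_le_one ((reverse_natDegree_le _).trans (by simp))
    | cons a M ih =>
      rw [Multiset.map_cons, Multiset.prod_cons, reverse_mul_of_domain]
      exact Splits.mul (Splits.of_natDegree_le_one
        ((reverse_natDegree_le _).trans (natDegree_X_sub_C a).le)) ih
  have h := hp.eq_prod_roots
  rw [h, reverse_mul_of_domain]
  exact Splits.mul
    (Splits.of_natDegree_le_one ((reverse_natDegree_le _).trans (by simp))) (key _)

open Polynomial in
lemma NM.discrim_step {p : ℝ[X]} (hp : p.Splits) (h2 : p.natDegree ≤ 2) :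
    4 * p.coeff 2 * p.coeff 0 ≤ (p.coeff 1) ^ 2 := by
  rcases eq_or_ne (p.coeff 2) 0 with h | h
  · rw [h]; simpa using sq_nonneg (p.coeff 1)
  have hdeg : p.natDegree = 2 := le_antisymm h2 (le_natDegree_of_ne_zero h)
  have hp0 : p ≠ 0 := fun h0 => h (by simp [h0])
  have hcard : p.roots.card = 2 := by
    rw [splits_iff_card_roots] at hp; rw [hp, hdeg]
  obtain ⟨x, hx⟩ := Multiset.card_pos_iff_exists_mem.mp (by rw [hcard]; omega)
  have hroot : p.eval x = 0 := (mem_roots hp0).mp hx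
  rw [eval_eq_sum_range, hdeg] at hroot
  have hxx : p.coeff 0 + p.coeff 1 * x + p.coeff 2 * x ^ 2 = 0 := by
    rw [Finset.sum_range_succ, Finset.sum_range_succ, Finset.sum_range_one] at hroot
    linarith [hroot]
  have h4 : 4 * p.coeff 2 * (p.coeff 0 + p.coeff 1 * x + p.coeff 2 * x ^ 2) = 0 := by
    rw [hxx]; ring
  nlinarith [sq_nonneg (2 * p.coeff 2 * x + p.coeff 1), h4]

lemma NM.esymm_zero (n : ℕ) (lam : Fin n → ℝ) : esymm n 0 lam = 1 := by
  simp [esymm]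

open Polynomial in
lemma NM.newton_core (n m : ℕ) (hm : 1 ≤ m) (hmn : m + 1 ≤ n) (lam : Fin n → ℝ) :
    ((m : ℝ) + 1) * ((n : ℝ) - m + 1) * esymm n (m - 1) lam * esymm n (m + 1) lam ≤
      (m : ℝ) * ((n : ℝ) - m) * esymm n m lam ^ 2 := by
  set t := n - (m + 1) with ht
  set f : ℝ[X] := ∏ i : Fin n, (X + C (lam i)) with hfdef
  have hcard : (Finset.univ : Finset (Fin n)).card = n := by simp
  have hfcoeff : ∀ j, j ≤ n → f.coeff j = esymm n (n - j) lam := by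
    intro j hj
    rw [hfdef, Finset.prod_X_add_C_coeff _ _ (by rw [hcard]; exact hj), hcard, esymm]
  have hfdeg : f.natDegree = n := by
    rw [hfdef]
    rw [natDegree_prod_of_monic _ _ (fun i _ => monic_X_add_C (lam i))]
    simp
  have hfsplits : f.Splits :=
    Splits.prod (fun i _ => Splits.of_natDegree_le_one (natDegree_X_add_C (lam i)).le)
  set g : ℝ[X] := derivative^[t] f with hgdef
  have hgsplits : g.Splits := NM.splits_iterate_derivative hfsplits t
  have hgcoeff : ∀ s, g.coeff s = ((s + t).descFactorial t : ℝ) * f.coeff (s + t) := by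
    intro s
    rw [hgdef, coeff_iterate_derivative, nsmul_eq_mul]
  have hgdeg : g.natDegree = m + 1 := by
    have hle : g.natDegree ≤ m + 1 := by
      rw [natDegree_le_iff_coeff_eq_zero]
      intro s hs
      rw [hgcoeff s, coeff_eq_zero_of_natDegree_lt (by rw [hfdeg]; omega), mul_zero]
    have hne : g.coeff (m + 1) ≠ 0 := by
      rw [hgcoeff, show m + 1 + t = n by omega, hfcoeff n le_rfl, Nat.sub_self,
        NM.esymm_zero, mul_one]
      have : n.descFactorial t ≠ 0 := by
        intro h0
        have := Nat.descFactorial_eq_zero_iff_lt.mp h0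
        omega
      exact_mod_cast this
    exact le_antisymm hle (le_natDegree_of_ne_zero hne)
  set h : ℝ[X] := g.reverse with hhdef
  have hhsplits : h.Splits := NM.splits_reverse hgsplits
  have hhcoeff : ∀ s, s ≤ m + 1 → h.coeff s = g.coeff (m + 1 - s) := by
    intro s hs
    rw [hhdef, coeff_reverse, hgdeg, revAt_le hs]
  have hhdeg : h.natDegree ≤ m + 1 := (reverse_natDegree_le _).trans hgdeg.le
  set q : ℝ[X] := derivative^[m - 1] h with hqdef
  have hqsplits : q.Splits := NM.splits_iterate_derivative hhsplits _
  have hqcoeff : ∀ s, q.coeff s = ((s + (m - 1)).descFactorial (m - 1) : ℝ) * h.coeff (s + (m - 1)) := by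
    intro s
    rw [hqdef, coeff_iterate_derivative, nsmul_eq_mul]
  have hqdeg : q.natDegree ≤ 2 := by
    rw [natDegree_le_iff_coeff_eq_zero]
    intro s hs
    rw [hqcoeff s, coeff_eq_zero_of_natDegree_lt (by omega), mul_zero]
  -- the three coefficients
  have hq2 : q.coeff 2 = ((m + 1).descFactorial (m - 1) : ℝ) *
      ((t.descFactorial t : ℝ) * esymm n (m + 1) lam) := by
    rw [hqcoeff, show 2 + (m - 1) = m + 1 by omega, hhcoeff (m + 1) le_rfl, Nat.sub_self,
      hgcoeff, zero_add, hfcoeff t (by omega), show n - t = m + 1 by omega]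
  have hq1 : q.coeff 1 = (m.descFactorial (m - 1) : ℝ) *
      (((1 + t).descFactorial t : ℝ) * esymm n m lam) := by
    rw [hqcoeff, show 1 + (m - 1) = m by omega, hhcoeff m (by omega),
      show m + 1 - m = 1 by omega, hgcoeff, hfcoeff (1 + t) (by omega),
      show n - (1 + t) = m by omega]
  have hq0 : q.coeff 0 = (((m - 1).descFactorial (m - 1) : ℝ) *
      (((2 + t).descFactorial t : ℝ) * esymm n (m - 1) lam)) := by
    rw [hqcoeff, zero_add, hhcoeff (m - 1) (by omega), show m + 1 - (m - 1) = 2 by omega,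
      hgcoeff, hfcoeff (2 + t) (by omega), show n - (2 + t) = m - 1 by omega]
  have hdisc := NM.discrim_step hqsplits hqdeg
  rw [hq0, hq1, hq2] at hdisc
  -- the combinatorial identity
  have e1 : 2 * (m + 1).descFactorial (m - 1) = (m + 1).factorial := by
    have h0 := Nat.factorial_mul_descFactorial (show m - 1 ≤ m + 1 by omega)
    rw [show m + 1 - (m - 1) = 2 by omega] at h0
    simpa [Nat.factorial] using h0
  have e2 : m.descFactorial (m - 1) = m.factorial := by
    have h0 := Nat.factorial_mul_descFactorial (show m - 1 ≤ m by omega)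
    rw [show m - (m - 1) = 1 by omega] at h0
    simpa [Nat.factorial] using h0
  have e3 : (m - 1).descFactorial (m - 1) = (m - 1).factorial := Nat.descFactorial_self _
  have e4 : t.descFactorial t = t.factorial := Nat.descFactorial_self _
  have e5 : (1 + t).descFactorial t = (1 + t).factorial := by
    have h0 := Nat.factorial_mul_descFactorial (show t ≤ 1 + t by omega)
    rw [show 1 + t - t = 1 by omega] at h0
    simpa [Nat.factorial] using h0
  have e6 : 2 * (2 + t).descFactorial t = (2 + t).factorial := by
    have h0 := Nat.factorial_mul_descFactorial (show t ≤ 2 + t by omega)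
    rw [show 2 + t - t = 2 by omega] at h0
    simpa [Nat.factorial] using h0
  have key : (m.descFactorial (m - 1)) ^ 2 * ((1 + t).descFactorial t) ^ 2 * ((m + 1) * (t + 2)) =
      4 * ((m + 1).descFactorial (m - 1) * (t.descFactorial t) *
        ((m - 1).descFactorial (m - 1) * ((2 + t).descFactorial t))) * (m * (t + 1)) := by
    have hm' : m = (m - 1) + 1 := by omega
    have hfm : m.factorial = m * (m - 1).factorial := by
      rw [hm']; rw [Nat.factorial_succ]; congr 1 <;> omega
    have hfm1 : (m + 1).factorial = (m + 1) * m.factorial := Nat.factorial_succ m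
    have hft1 : (1 + t).factorial = (1 + t) * t.factorial := by
      rw [Nat.add_comm 1 t]; exact Nat.factorial_succ t
    have hft2 : (2 + t).factorial = (2 + t) * (1 + t).factorial := by
      rw [show 2 + t = (1 + t) + 1 by omega, Nat.factorial_succ]
    have h16 : 4 * ((m.descFactorial (m - 1)) ^ 2 * ((1 + t).descFactorial t) ^ 2 *
        ((m + 1) * (t + 2))) =
        4 * (4 * ((m + 1).descFactorial (m - 1) * (t.descFactorial t) *
        ((m - 1).descFactorial (m - 1) * ((2 + t).descFactorial t))) * (m * (t + 1))) := by
      have r1 : 4 * (4 * ((m + 1).descFactorial (m - 1) * (t.descFactorial t) *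
          ((m - 1).descFactorial (m - 1) * ((2 + t).descFactorial t))) * (m * (t + 1))) =
          4 * ((2 * (m + 1).descFactorial (m - 1)) * (t.descFactorial t) *
          ((m - 1).descFactorial (m - 1) * (2 * (2 + t).descFactorial t)) * (m * (t + 1))) := by
        ring
      rw [r1, e1, e2, e3, e4, e5, e6, hfm1, hft2, hfm, hft1]
      ring
    exact Nat.eq_of_mul_eq_mul_left (by norm_num) h16
  have b1 : 0 < m.descFactorial (m - 1) := by
    rcases Nat.eq_zero_or_pos (m.descFactorial (m - 1)) with h0 | h0
    · have := Nat.descFactorial_eq_zero_iff_lt.mp h0; omega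
    · exact h0
  have b2 : 0 < (1 + t).descFactorial t := by
    rcases Nat.eq_zero_or_pos ((1 + t).descFactorial t) with h0 | h0
    · have := Nat.descFactorial_eq_zero_iff_lt.mp h0; omega
    · exact h0
  have b1R : (0 : ℝ) < (m.descFactorial (m - 1) : ℝ) := by exact_mod_cast b1
  have b2R : (0 : ℝ) < ((1 + t).descFactorial t : ℝ) := by exact_mod_cast b2
  have hBpos : (0 : ℝ) < ((m.descFactorial (m - 1) : ℝ) * ((1 + t).descFactorial t : ℝ)) ^ 2 := by
    positivity
  -- main inequality with t
  have keyR : ((m.descFactorial (m - 1) : ℝ)) ^ 2 * (((1 + t).descFactorial t : ℝ)) ^ 2 *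
      (((m : ℝ) + 1) * ((t : ℝ) + 2)) =
      4 * (((m + 1).descFactorial (m - 1) : ℝ) * ((t.descFactorial t : ℝ)) *
      (((m - 1).descFactorial (m - 1) : ℝ) * (((2 + t).descFactorial t : ℝ)))) *
      ((m : ℝ) * ((t : ℝ) + 1)) := by
    exact_mod_cast congrArg (fun x : ℕ => (x : ℝ)) key
  have main : ((m : ℝ) + 1) * ((t : ℝ) + 2) * (esymm n (m - 1) lam * esymm n (m + 1) lam) ≤
      (m : ℝ) * ((t : ℝ) + 1) * esymm n m lam ^ 2 := by
    rw [← mul_le_mul_iff_right₀ hBpos]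
    calc ((m.descFactorial (m - 1) : ℝ) * ((1 + t).descFactorial t : ℝ)) ^ 2 *
          (((m : ℝ) + 1) * ((t : ℝ) + 2) * (esymm n (m - 1) lam * esymm n (m + 1) lam))
        = ((m : ℝ) * ((t : ℝ) + 1)) *
          (4 * (((m + 1).descFactorial (m - 1) : ℝ) * ((t.descFactorial t : ℝ) * esymm n (m + 1) lam)) *
          (((m - 1).descFactorial (m - 1) : ℝ) * (((2 + t).descFactorial t : ℝ) * esymm n (m - 1) lam))) := by
          linear_combination (esymm n (m - 1) lam * esymm n (m + 1) lam) * keyR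
      _ ≤ ((m : ℝ) * ((t : ℝ) + 1)) *
          (((m.descFactorial (m - 1) : ℝ) * (((1 + t).descFactorial t : ℝ) * esymm n m lam)) ^ 2) := by
          apply mul_le_mul_of_nonneg_left hdisc
          positivity
      _ = ((m.descFactorial (m - 1) : ℝ) * ((1 + t).descFactorial t : ℝ)) ^ 2 *
          ((m : ℝ) * ((t : ℝ) + 1) * esymm n m lam ^ 2) := by ring
  have hts : (t : ℝ) = (n : ℝ) - m - 1 := by
    rw [ht]
    push_cast [Nat.cast_sub hmn]
    ring
  rw [hts] at main
  have e7 : ((m : ℝ) + 1) * ((n : ℝ) - m + 1) * esymm n (m - 1) lam * esymm n (m + 1) lam =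
      ((m : ℝ) + 1) * (((n : ℝ) - m - 1) + 2) * (esymm n (m - 1) lam * esymm n (m + 1) lam) := by
    ring
  have e8 : (m : ℝ) * ((n : ℝ) - m) * esymm n m lam ^ 2 =
      (m : ℝ) * (((n : ℝ) - m - 1) + 1) * esymm n m lam ^ 2 := by ring
  rw [e7, e8]
  exact main

lemma NM.chain (n l : ℕ) (hl : 1 ≤ l) (lam : Fin n → ℝ) :
    ∀ k, l ≤ k → k ≤ n → (∀ i, 1 ≤ i → i ≤ k → 0 < esymm n i lam) →
    (k : ℝ) * ((n : ℝ) - l + 1) * esymm n (l - 1) lam * esymm n k lam ≤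
      (l : ℝ) * ((n : ℝ) - k + 1) * esymm n l lam * esymm n (k - 1) lam := by
  intro k
  induction k with
  | zero => intro h; omega
  | succ k ih =>
    intro hlk hkn hpos
    have hσ : ∀ j, j ≤ k + 1 → 0 < esymm n j lam := by
      intro j hj
      rcases Nat.eq_zero_or_pos j with rfl | hj0
      · rw [NM.esymm_zero]; norm_num
      · exact hpos j hj0 hj
    rcases Nat.lt_or_ge l (k + 1) with hlt | hge
    · have hlk' : l ≤ k := by omega
      have hk1 : 1 ≤ k := by omega
      have ihh := ih hlk' (by omega) (fun i h1 h2 => hpos i h1 (by omega))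
      have hnew := NM.newton_core n k hk1 (by omega) lam
      have hpl : (0 : ℝ) < (l : ℝ) * esymm n l lam := by
        have := hσ l (by omega)
        have hlR : (0 : ℝ) < (l : ℝ) := by exact_mod_cast hl
        positivity
      have hpk : (0 : ℝ) < (k : ℝ) * esymm n k lam := by
        have := hσ k (by omega)
        have hkR : (0 : ℝ) < (k : ℝ) := by exact_mod_cast hk1
        positivity
      have hpk1 : (0 : ℝ) < ((k : ℝ) + 1) * esymm n (k + 1) lam := by
        have := hσ (k + 1) le_rfl
        positivity
      have u1 : ((n : ℝ) - l + 1) * esymm n (l - 1) lam / ((l : ℝ) * esymm n l lam) ≤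
          ((n : ℝ) - k + 1) * esymm n (k - 1) lam / ((k : ℝ) * esymm n k lam) := by
        rw [div_le_div_iff₀ hpl hpk]
        nlinarith [ihh]
      have u2 : ((n : ℝ) - k + 1) * esymm n (k - 1) lam / ((k : ℝ) * esymm n k lam) ≤
          ((n : ℝ) - k) * esymm n k lam / (((k : ℝ) + 1) * esymm n (k + 1) lam) := by
        rw [div_le_div_iff₀ hpk hpk1]
        nlinarith [hnew]
      have u3 := u1.trans u2
      rw [div_le_div_iff₀ hpl hpk1] at u3
      push_cast
      nlinarith [u3]
    · have hle : l = k + 1 := by omega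
      subst hle
      rw [show k + 1 - 1 = k from rfl]
      push_cast
      apply le_of_eq
      ring

/-- Newton-MacLaurin inequality on Γ⁺ₖ:
for 0 ≤ l < k ≤ n, k(n-l+1)·σ_{l-1}·σ_k ≤ l(n-k+1)·σ_l·σ_{k-1}. -/
theorem newton_maclaurin (n : ℕ) (l k : ℕ) (hlk : l < k) (hkn : k ≤ n)
    (lam : Fin n → ℝ) (hlam : lam ∈ gammaPlus n k) :
    (k : ℝ) * ((n : ℝ) - l + 1) * esymmZ n ((l : ℤ) - 1) lam * esymm n k lam ≤
      (l : ℝ) * ((n : ℝ) - k + 1) * esymm n l lam * esymm n (k - 1) lam := by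
  rcases Nat.eq_zero_or_pos l with rfl | hl
  · have h1 : esymmZ n ((0 : ℕ) - 1 : ℤ) lam = 0 := by
      rw [esymmZ, if_neg (by norm_num)]
    rw [h1]
    norm_num
  · have hZ : esymmZ n ((l : ℤ) - 1) lam = esymm n (l - 1) lam := by
      rw [esymmZ, if_pos (by omega)]
      congr 1
      omega
    rw [hZ]
    exact NM.chain n l hl lam k hlk.le hkn (fun i h1 h2 => hlam i h1 h2)
end

section
/- Let n ≥ 2 and 1 ≤ k ≤ n. If λ ∈ Γ⁺_k, then for every index i, σ_{k-1}(Λ_i) ≥ σ_k(λ)/σ₁(λ), where Λ_i denotes λ with the i-th entry deleted. -/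
open Finset

/-- σ_k(Λ_i): elementary symmetric polynomial of λ with the i-th entry deleted. -/
noncomputable def esymmErase (n k : ℕ) (i : Fin n) (lam : Fin n → ℝ) : ℝ :=
  ∑ s ∈ (Finset.univ.erase i).powersetCard k, ∏ j ∈ s, lam j


namespace NewtonAux

open Polynomial

set_option linter.unusedSectionVars false

/-- `p` splits over ℝ with `d` roots (counted with multiplicity) and nonzero scale. -/
def SF (p : ℝ[X]) (d : ℕ) : Prop :=
  ∃ a : ℝ, a ≠ 0 ∧ ∃ M : Multiset ℝ, Multiset.card M = d ∧
    p = C a * (M.map fun r => X - C r).prod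

lemma SF.ne_zero {p : ℝ[X]} {d : ℕ} (h : SF p d) : p ≠ 0 := by
  obtain ⟨a, ha, M, hM, rfl⟩ := h
  exact mul_ne_zero (C_ne_zero.2 ha)
    (monic_multiset_prod_of_monic _ _ fun r _ => monic_X_sub_C r).ne_zero

lemma SF.natDegree {p : ℝ[X]} {d : ℕ} (h : SF p d) : p.natDegree = d := by
  obtain ⟨a, ha, M, hM, rfl⟩ := h
  rw [natDegree_C_mul ha, natDegree_multiset_prod_X_sub_C_eq_card, hM]

lemma SF.roots {p : ℝ[X]} {d : ℕ} (h : SF p d) : Multiset.card p.roots = d := by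
  obtain ⟨a, ha, M, hM, rfl⟩ := h
  rw [roots_C_mul _ ha, roots_multiset_prod_X_sub_C, hM]

lemma SF.deriv {p : ℝ[X]} {d : ℕ} (h : SF p d) (hd : 1 ≤ d) :
    SF (Polynomial.derivative p) (d - 1) := by
  have hdeg := h.natDegree
  have hroots := h.roots
  have hlc : p.coeff d ≠ 0 := by
    rw [← hdeg]
    exact leadingCoeff_ne_zero.2 h.ne_zero
  have hd1 : d - 1 + 1 = d := by omega
  have hdcast : ((d - 1 : ℕ) : ℝ) + 1 = (d : ℝ) := by exact_mod_cast congrArg Nat.cast hd1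
  have hcoeff : (Polynomial.derivative p).coeff (d - 1) = p.coeff d * d := by
    rw [coeff_derivative, hd1, hdcast]
  have hne : Polynomial.derivative p ≠ 0 := by
    intro h0
    rw [h0, coeff_zero] at hcoeff
    have : (d : ℝ) ≠ 0 := Nat.cast_ne_zero.2 (by omega)
    exact this (by
      rcases mul_eq_zero.1 hcoeff.symm with h1 | h1
      · exact absurd h1 hlc
      · exact h1)
  have hdle : (Polynomial.derivative p).natDegree ≤ d - 1 :=
    (natDegree_derivative_le p).trans (by omega)
  have hdge : d - 1 ≤ Multiset.card (Polynomial.derivative p).roots := by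
    have := p.card_roots_le_derivative
    omega
  have hcard : Multiset.card (Polynomial.derivative p).roots = (Polynomial.derivative p).natDegree := by
    have := (Polynomial.derivative p).card_roots'
    omega
  refine ⟨(Polynomial.derivative p).leadingCoeff, leadingCoeff_ne_zero.2 hne,
    (Polynomial.derivative p).roots, ?_, (C_leadingCoeff_mul_prod_multiset_X_sub_C hcard).symm⟩
  omega

lemma SF.iterate {p : ℝ[X]} {d : ℕ} (h : SF p d) (e : ℕ) (he : e ≤ d) :
    SF (Polynomial.derivative^[e] p) (d - e) := by
  induction e with
  | zero => simpa using h
  | succ e ih =>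
    rw [Function.iterate_succ_apply']
    have h1 := (ih (by omega)).deriv (by omega)
    have : d - e - 1 = d - (e + 1) := by omega
    rwa [this] at h1

lemma reflect_one_X_sub_C (r : ℝ) : reflect 1 (X - C r) = 1 - C r * X := by
  ext i
  rw [coeff_reflect]
  match i with
  | 0 => simp [revAt_le]
  | 1 => simp [revAt_le, coeff_one]
  | (n+2) =>
    rw [revAt_eq_self_of_lt (by omega)]
    rw [coeff_sub, coeff_X, coeff_C]
    simp [coeff_one, coeff_C_mul, coeff_X]

lemma reflect_multiset_prod (M : Multiset ℝ) :
    reflect (Multiset.card M) ((M.map fun r => X - C r).prod)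
      = (M.map fun r => 1 - C r * X).prod := by
  induction M using Multiset.induction with
  | empty => simp [reflect_C 1 0]
  | cons r M ih =>
    rw [Multiset.map_cons, Multiset.map_cons, Multiset.prod_cons, Multiset.prod_cons,
      Multiset.card_cons]
    have h1 : Multiset.card M + 1 = 1 + Multiset.card M := by omega
    rw [h1, reflect_mul (X - C r) _ (natDegree_X_sub_C r).le
      ((natDegree_multiset_prod_X_sub_C_eq_card M).le), reflect_one_X_sub_C, ih]

lemma SF.reflectSF {p : ℝ[X]} {d : ℕ} (h : SF p d) (h0 : p.coeff 0 ≠ 0) :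
    SF (reflect d p) d := by
  obtain ⟨a, ha, M, hM, rfl⟩ := h
  subst hM
  have hprod : ∀ r ∈ M, r ≠ 0 := by
    intro r hr hr0
    apply h0
    rw [mul_coeff_zero, coeff_C]
    have hz : ((M.map fun r => X - C r).prod).coeff 0 = 0 := by
      rw [Polynomial.coeff_zero_eq_eval_zero, Polynomial.eval_multiset_prod]
      apply Multiset.prod_eq_zero
      rw [Multiset.mem_map]
      refine ⟨X - C r, Multiset.mem_map_of_mem _ hr, ?_⟩
      simp [hr0]
    simp [hz]
  have hrefl : reflect (Multiset.card M) (C a * (M.map fun r => X - C r).prod)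
      = C a * (M.map fun r => 1 - C r * X).prod := by
    rw [reflect_C_mul, reflect_multiset_prod]
  have hfac : (M.map fun r => (1 : ℝ[X]) - C r * X) = M.map fun r => C (-r) * (X - C r⁻¹) := by
    apply Multiset.map_congr rfl
    intro r hr
    have h1 : r ≠ 0 := hprod r hr
    have h2 : (-r) * r⁻¹ = -1 := by field_simp
    rw [mul_sub, ← C_mul, h2]
    simp only [map_neg, C_1]
    ring
  rw [hrefl, hfac, Multiset.prod_map_mul]
  have hCprod : (M.map fun r => (C (-r) : ℝ[X])).prod = C ((M.map fun r => -r).prod) := by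
    rw [show (M.map fun r => (C (-r) : ℝ[X])) = (M.map fun r => -r).map C from by
      rw [Multiset.map_map]; rfl]
    exact (map_multiset_prod (C : ℝ →+* ℝ[X]) _).symm
  rw [hCprod, ← mul_assoc, ← C_mul]
  refine ⟨a * (M.map fun r => -r).prod, ?_, M.map fun r => r⁻¹, by rw [Multiset.card_map], ?_⟩
  · apply mul_ne_zero ha
    apply Multiset.prod_ne_zero
    rw [Multiset.mem_map]
    rintro ⟨r, hr, hr0⟩
    exact hprod r hr (by linarith [hr0] )
  · rw [Multiset.map_map]
    rfl

lemma SF.quad {p : ℝ[X]} (h : SF p 2) : 4 * (p.coeff 2 * p.coeff 0) ≤ (p.coeff 1) ^ 2 := by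
  obtain ⟨a, ha, M, hM, rfl⟩ := h
  obtain ⟨r, u, rfl⟩ := Multiset.card_eq_two.1 hM
  have hp : C a * ((({r, u} : Multiset ℝ).map fun x => X - C x).prod)
      = C (a * (r * u)) - C (a * (r + u)) * X + C a * X ^ 2 := by
    rw [show ({r, u} : Multiset ℝ) = r ::ₘ {u} from rfl]
    rw [Multiset.map_cons, Multiset.prod_cons, Multiset.map_singleton, Multiset.prod_singleton]
    rw [C_mul, C_mul, C_mul, C_add]
    ring
  rw [hp]
  simp only [coeff_add, coeff_sub, coeff_C_mul, coeff_C, coeff_X_pow, coeff_mul_X, coeff_X]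
  norm_num
  nlinarith [sq_nonneg (a * (r - u)), sq_nonneg (r - u), mul_self_nonneg a]

variable {ι : Type*} [DecidableEq ι]

noncomputable def E (s : Finset ι) (k : ℕ) (f : ι → ℝ) : ℝ :=
  ∑ t ∈ s.powersetCard k, ∏ i ∈ t, f i

lemma E_zero (s : Finset ι) (f : ι → ℝ) : E s 0 f = 1 := by simp [E]

lemma E_one (s : Finset ι) (f : ι → ℝ) : E s 1 f = ∑ i ∈ s, f i := by
  rw [E, powersetCard_one, sum_map]
  simp

lemma E_of_card_lt {s : Finset ι} {k : ℕ} (f : ι → ℝ) (h : s.card < k) : E s k f = 0 := by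
  rw [E, powersetCard_eq_empty.2 h, sum_empty]

lemma E_pos {s : Finset ι} {k : ℕ} {f : ι → ℝ} (h : ∀ j ∈ s, 0 < f j) (hk : k ≤ s.card) :
    0 < E s k f := by
  apply sum_pos
  · intro t ht
    exact prod_pos fun j hj => h j ((mem_powersetCard.1 ht).1 hj)
  · exact powersetCard_nonempty.2 hk

lemma E_erase {s : Finset ι} {i : ι} (hi : i ∈ s) (k : ℕ) (f : ι → ℝ) :
    E s (k+1) f = f i * E (s.erase i) k f + E (s.erase i) (k+1) f := by
  have hins : s = insert i (s.erase i) := (insert_erase hi).symm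
  conv_lhs => rw [E, hins, powersetCard_succ_insert (notMem_erase i s)]
  rw [sum_union, sum_image]
  · have h1 : ∀ t ∈ (s.erase i).powersetCard k, (∏ j ∈ insert i t, f j) = f i * ∏ j ∈ t, f j := by
      intro t ht
      have h2 : i ∉ t := fun h => (notMem_erase i s) ((mem_powersetCard.1 ht).1 h)
      rw [prod_insert h2]
    rw [sum_congr rfl h1, ← mul_sum]
    rw [add_comm]
    rfl
  · intro x hx y hy hxy
    have hix : i ∉ x := fun h => (notMem_erase i s) ((mem_powersetCard.1 hx).1 h)
    have hiy : i ∉ y := fun h => (notMem_erase i s) ((mem_powersetCard.1 hy).1 h)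
    rw [← erase_insert hix, ← erase_insert hiy, hxy]
  · rw [disjoint_left]
    intro t ht ht2
    obtain ⟨t', _, rfl⟩ := mem_image.1 ht2
    exact (notMem_erase i s) ((mem_powersetCard.1 ht).1 (mem_insert_self i t'))

lemma E_sum_mul (s : Finset ι) (f : ι → ℝ) (k : ℕ) :
    ∑ i ∈ s, f i * E (s.erase i) k f = (k+1 : ℝ) * E s (k+1) f := by
  have h1 : ∑ i ∈ s, f i * E (s.erase i) k f
      = ∑ p ∈ s.sigma (fun i => (s.erase i).powersetCard k), f p.1 * ∏ j ∈ p.2, f j := by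
    rw [sum_sigma]
    exact sum_congr rfl fun i _ => by rw [E, mul_sum]
  have h2 : ∑ u ∈ s.powersetCard (k+1), ∑ i ∈ u, f i * ∏ j ∈ u.erase i, f j
      = ∑ p ∈ (s.powersetCard (k+1)).sigma (fun u => u), f p.2 * ∏ j ∈ p.1.erase p.2, f j := by
    rw [sum_sigma]
  rw [h1]
  rw [sum_nbij' (i := fun p : (Σ _ : ι, Finset ι) => (⟨insert p.1 p.2, p.1⟩ : Σ _ : Finset ι, ι))
      (j := fun p : (Σ _ : Finset ι, ι) => (⟨p.2, p.1.erase p.2⟩ : Σ _ : ι, Finset ι))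
      (t := (s.powersetCard (k+1)).sigma (fun u => u))
      (g := fun p => f p.2 * ∏ j ∈ p.1.erase p.2, f j)]
  · rw [← h2]
    have h3 : ∀ u ∈ s.powersetCard (k+1), (∑ i ∈ u, f i * ∏ j ∈ u.erase i, f j)
        = (k+1 : ℝ) * ∏ j ∈ u, f j := by
      intro u hu
      obtain ⟨hus, huc⟩ := mem_powersetCard.1 hu
      calc ∑ i ∈ u, f i * ∏ j ∈ u.erase i, f j = ∑ _i ∈ u, ∏ j ∈ u, f j :=
            sum_congr rfl fun i hi => mul_prod_erase u f hi
        _ = (k+1 : ℝ) * ∏ j ∈ u, f j := by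
            rw [sum_const, nsmul_eq_mul, huc]
            push_cast
            ring
    rw [sum_congr rfl h3, ← mul_sum]
    rfl
  · rintro ⟨a, t⟩ hp
    rw [mem_sigma] at hp
    obtain ⟨has, ht⟩ := hp
    obtain ⟨hts, htc⟩ := mem_powersetCard.1 ht
    have hat : a ∉ t := fun h => (notMem_erase a s) (hts h)
    rw [mem_sigma, mem_powersetCard]
    refine ⟨⟨insert_subset has ((hts.trans (erase_subset a s))), ?_⟩, mem_insert_self a t⟩
    rw [card_insert_of_notMem hat, htc]
  · rintro ⟨u, b⟩ hp
    rw [mem_sigma] at hp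
    obtain ⟨hu, hbu⟩ := hp
    obtain ⟨hus, huc⟩ := mem_powersetCard.1 hu
    rw [mem_sigma, mem_powersetCard]
    refine ⟨hus hbu, ?_, ?_⟩
    · exact fun x hx => mem_erase.2 ⟨(mem_erase.1 hx).1, hus (mem_erase.1 hx).2⟩
    · rw [card_erase_of_mem hbu, huc]
      omega
  · rintro ⟨a, t⟩ hp
    rw [mem_sigma] at hp
    have hat : a ∉ t := fun h => (notMem_erase a s) ((mem_powersetCard.1 hp.2).1 h)
    simp [erase_insert hat]
  · rintro ⟨u, b⟩ hp
    rw [mem_sigma] at hp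
    simp [insert_erase hp.2]
  · rintro ⟨a, t⟩ hp
    rw [mem_sigma] at hp
    have hat : a ∉ t := fun h => (notMem_erase a s) ((mem_powersetCard.1 hp.2).1 h)
    simp [erase_insert hat]

lemma prod_coeff (s : Finset ι) (f : ι → ℝ) {r : ℕ} (hr : r ≤ s.card) :
    (∏ i ∈ s, (X + C (f i))).coeff (s.card - r) = E s r f := by
  rw [Finset.prod_X_add_C_coeff _ _ (Nat.sub_le _ _), Nat.sub_sub_self hr]
  rfl

lemma prod_eq_sum (s : Finset ι) (f : ι → ℝ) :
    (∏ i ∈ s, (X + C (f i))) = ∑ r ∈ range (s.card + 1), C (E s r f) * X ^ (s.card - r) := by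
  have h := Multiset.prod_X_add_C_eq_sum_esymm (s.val.map f)
  rw [Multiset.map_map] at h
  have hc : Multiset.card (s.val.map f) = s.card := by rw [Multiset.card_map]; rfl
  rw [hc] at h
  rw [Finset.prod]
  convert h using 2 with r hr
  rfl
  rfl
  rw [Finset.esymm_map_val]
  rfl

lemma E_shift (s : Finset ι) (f : ι → ℝ) {j : ℕ} (hj : j ≤ s.card) (t : ℝ) :
    E s j (fun w => f w + t) =
      ∑ r ∈ range (j + 1), ((s.card - r).choose (j - r) : ℝ) * t ^ (j - r) * E s r f := by
  set m := s.card with hm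
  have hP : (∏ i ∈ s, (X + C (f i + t))) = (∏ i ∈ s, (X + C (f i))).comp (X + C t) := by
    rw [Polynomial.prod_comp]
    refine prod_congr rfl fun i _ => ?_
    rw [add_comp, X_comp, C_comp, C_add]
    ring
  have hlhs : E s j (fun w => f w + t) = (∏ i ∈ s, (X + C (f i + t))).coeff (m - j) :=
    (prod_coeff s _ hj).symm
  rw [hlhs, hP, prod_eq_sum]
  rw [Polynomial.sum_comp, finset_sum_coeff]
  have hstep : ∀ r ∈ range (m + 1),
      ((C (E s r f) * X ^ (m - r)).comp (X + C t)).coeff (m - j)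
        = E s r f * (t ^ (m - r - (m - j)) * ((m - r).choose (m - j) : ℝ)) := by
    intro r _
    rw [mul_comp, C_comp, pow_comp, X_comp, coeff_C_mul, coeff_X_add_C_pow]
  rw [sum_congr rfl hstep]
  rw [← sum_subset (range_subset_range.2 (by omega : j + 1 ≤ m + 1))]
  · refine sum_congr rfl fun r hr => ?_
    have hrj : r ≤ j := by simpa [Nat.lt_succ_iff] using hr
    have h1 : m - r - (m - j) = j - r := by omega
    have h2 : (m - r).choose (m - j) = (m - r).choose (j - r) := by
      have h3 : m - j ≤ m - r := by omega
      rw [← Nat.choose_symm h3, h1]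
    rw [h1, h2]
    ring
  · intro r hr hrn
    have hrj : j < r := by
      simp only [mem_range, Nat.lt_succ_iff] at hr hrn
      omega
    have hrm : r ≤ m := by simpa [Nat.lt_succ_iff] using hr
    have : (m - r).choose (m - j) = 0 := Nat.choose_eq_zero_of_lt (by omega)
    rw [this]
    push_cast
    ring

lemma SF_prod (s : Finset ι) (f : ι → ℝ) : SF (∏ i ∈ s, (X + C (f i))) s.card := by
  refine ⟨1, one_ne_zero, s.val.map (fun i => -f i), by rw [Multiset.card_map]; rfl, ?_⟩
  rw [C_1, one_mul, Finset.prod, Multiset.map_map]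
  congr 1
  apply Multiset.map_congr rfl
  intro i _
  simp [sub_neg_eq_add]

lemma newton_sign (s : Finset ι) (f : ι → ℝ) {j : ℕ} (hj : 1 ≤ j) (hc : j + 1 ≤ s.card)
    (h0 : E s j f = 0) : E s (j - 1) f * E s (j + 1) f ≤ 0 := by
  by_cases hEk : E s (j + 1) f = 0
  · simp [hEk]
  set m := s.card with hm
  set P := ∏ i ∈ s, (X + C (f i)) with hP
  have hSFP : SF P m := SF_prod s f
  set e1 := m - (j + 1) with he1
  set Q1 := Polynomial.derivative^[e1] P with hQ1
  have hSFQ1 : SF Q1 (j + 1) := by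
    have := hSFP.iterate e1 (by omega)
    rwa [show m - e1 = j + 1 by omega] at this
  have hQ1coeff : ∀ r, r ≤ j + 1 →
      Q1.coeff r = ((r + e1).descFactorial e1 : ℝ) * E s (j + 1 - r) f := by
    intro r hr
    rw [hQ1, Polynomial.coeff_iterate_derivative, nsmul_eq_mul]
    congr 1
    rw [show r + e1 = m - (j + 1 - r) by omega]
    exact prod_coeff s f (by omega)
  set Q2 := reflect (j + 1) Q1 with hQ2
  have hSFQ2 : SF Q2 (j + 1) := by
    apply hSFQ1.reflectSF
    rw [hQ1coeff 0 (by omega)]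
    simp only [Nat.zero_add, Nat.sub_zero]
    refine mul_ne_zero (Nat.cast_ne_zero.2 ?_) hEk
    rw [Ne, Nat.descFactorial_eq_zero_iff_lt]
    omega
  have hQ2coeff : ∀ r, r ≤ j + 1 →
      Q2.coeff r = (((j + 1 - r) + e1).descFactorial e1 : ℝ) * E s r f := by
    intro r hr
    rw [hQ2, coeff_reflect, revAt_le hr, hQ1coeff (j + 1 - r) (by omega),
      show j + 1 - (j + 1 - r) = r by omega]
  set Q3 := Polynomial.derivative^[j - 1] Q2 with hQ3
  have hSFQ3 : SF Q3 2 := by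
    have := hSFQ2.iterate (j - 1) (by omega)
    rwa [show j + 1 - (j - 1) = 2 by omega] at this
  have hQ3coeff : ∀ t, t ≤ 2 →
      Q3.coeff t = ((t + (j - 1)).descFactorial (j - 1) : ℝ) *
        ((((j + 1 - (t + (j - 1))) + e1).descFactorial e1 : ℝ) * E s (t + (j - 1)) f) := by
    intro t ht
    rw [hQ3, Polynomial.coeff_iterate_derivative, nsmul_eq_mul, hQ2coeff _ (by omega)]
  have hquad := hSFQ3.quad
  rw [hQ3coeff 0 (by omega), hQ3coeff 1 (by omega), hQ3coeff 2 (by omega)] at hquad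
  rw [show 1 + (j - 1) = j by omega] at hquad
  rw [h0] at hquad
  rw [show 0 + (j - 1) = j - 1 by omega, show 2 + (j - 1) = j + 1 by omega] at hquad
  have hposN : ∀ a b : ℕ, b ≤ a → (0:ℝ) < (a.descFactorial b : ℝ) := by
    intro a b hab
    have : a.descFactorial b ≠ 0 := by
      rw [Ne, Nat.descFactorial_eq_zero_iff_lt]
      omega
    exact_mod_cast Nat.pos_of_ne_zero this
  have c1 : (0:ℝ) < ((j - 1).descFactorial (j - 1) : ℝ) := hposN _ _ le_rfl
  have c2 : (0:ℝ) < (((j + 1 - (j - 1)) + e1).descFactorial e1 : ℝ) := hposN _ _ (by omega)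
  have c3 : (0:ℝ) < ((j + 1).descFactorial (j - 1) : ℝ) := hposN _ _ (by omega)
  have c4 : (0:ℝ) < (((j + 1 - (j + 1)) + e1).descFactorial e1 : ℝ) := hposN _ _ (by omega)
  nlinarith [mul_pos (mul_pos c1 c2) (mul_pos c3 c4)]

lemma E_continuous (s : Finset ι) (k : ℕ) (f : ι → ℝ) :
    Continuous fun t : ℝ => E s k (fun w => f w + t) := by
  unfold E
  exact continuous_finset_sum _ fun u _ =>
    continuous_finset_prod _ fun j _ => continuous_const.add continuous_id

/-- Positivity of `E s r (f + t)` for `t ≥ 0` when `f ∈ Γ⁺`. -/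

lemma E_shift_pos {s : Finset ι} {f : ι → ℝ} {k : ℕ}
    (hpos : ∀ r, 1 ≤ r → r ≤ k → 0 < E s r f) (hk : k ≤ s.card)
    {t : ℝ} (ht : 0 ≤ t) {r : ℕ} (h1 : 1 ≤ r) (h2 : r ≤ k) :
    0 < E s r (fun w => f w + t) := by
  rw [E_shift s f (le_trans h2 hk) t]
  apply sum_pos'
  · intro x hx
    rw [mem_range, Nat.lt_succ_iff] at hx
    apply mul_nonneg (mul_nonneg (Nat.cast_nonneg _) (pow_nonneg ht _))
    rcases Nat.eq_zero_or_pos x with hx0 | hx0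
    · subst hx0; rw [E_zero]; norm_num
    · exact (hpos x hx0 (le_trans hx h2)).le
  · refine ⟨r, mem_range.2 (by omega), ?_⟩
    have : r - r = 0 := by omega
    rw [this]
    simp only [Nat.choose_zero_right, Nat.cast_one, pow_zero, one_mul, mul_one]
    exact hpos r h1 h2

/-- Key lemma: if `f ∈ Γ⁺_k` on `s`, then all lower symmetric functions of any deletion
are positive. -/

lemma lemA : ∀ (k : ℕ) (s : Finset ι) (f : ι → ℝ), k ≤ s.card →
    (∀ r, 1 ≤ r → r ≤ k → 0 < E s r f) →
    ∀ i ∈ s, ∀ l, l + 1 ≤ k → 0 < E (s.erase i) l f := by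
  intro k
  induction k with
  | zero => intro s f _ _ i _ l hl; omega
  | succ k ih =>
    intro s f hcard hpos i hi l hl
    by_cases hlk : l + 1 ≤ k
    · exact ih s f (by omega) (fun r h1 h2 => hpos r h1 (by omega)) i hi l hlk
    -- l = k
    have hlk' : l = k := by omega
    subst hlk'
    rcases Nat.eq_zero_or_pos l with hl0 | hl1
    · subst hl0; rw [E_zero]; norm_num
    -- now 1 ≤ l = k, show 0 < E (s.erase i) k f  (writing k for l)
    set T : ℝ := 1 + ∑ j ∈ s, |f j| with hT
    have hT0 : (0:ℝ) ≤ T := by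
      rw [hT]
      positivity
    have hfT : ∀ w ∈ s, 0 < f w + T := by
      intro w hw
      have h1 : |f w| ≤ ∑ j ∈ s, |f j| :=
        single_le_sum (fun j _ => abs_nonneg (f j)) hw
      have h2 : -f w ≤ |f w| := neg_le_abs (f w)
      rw [hT]
      linarith
    set g : ℝ → ℝ := fun t => E (s.erase i) l (fun w => f w + t) with hg
    have hgT : 0 < g T := by
      apply E_pos (fun w hw => hfT w (mem_of_mem_erase hw))
      rw [card_erase_of_mem hi]
      omega
    have hne : ∀ t ∈ Set.Icc (0:ℝ) T, g t ≠ 0 := by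
      intro t ht hzero
      set h : ι → ℝ := fun w => f w + t with hh
      have hΓ : ∀ r, 1 ≤ r → r ≤ l + 1 → 0 < E s r h :=
        fun r h1 h2 => E_shift_pos hpos hcard ht.1 h1 h2
      have hzero' : E (s.erase i) l h = 0 := hzero
      have hsplit := E_erase hi l h
      have h1 : 0 < E s (l + 1) h := hΓ (l + 1) (by omega) le_rfl
      have h3 : 0 < E (s.erase i) (l + 1) h := by
        rw [hsplit, hzero', mul_zero, zero_add] at h1
        exact h1
      by_cases hcc : l + 2 ≤ s.card
      · have h4 : 0 < E (s.erase i) (l - 1) h := by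
          apply ih s h (by omega) (fun r hr1 hr2 => hΓ r hr1 (by omega)) i hi (l - 1) (by omega)
        have h5 := newton_sign (s.erase i) h hl1
          (by rw [card_erase_of_mem hi]; omega) hzero'
        nlinarith
      · have hc2 : (s.erase i).card < l + 1 := by
          rw [card_erase_of_mem hi]
          omega
        rw [E_of_card_lt h hc2] at h3
        exact lt_irrefl 0 h3
    by_contra hcon
    push_neg at hcon
    have hg0 : g 0 < 0 := by
      have hg0' : g 0 = E (s.erase i) l f := by
        show E (s.erase i) l (fun w => f w + 0) = _
        norm_num
      rcases lt_or_eq_of_le (hg0'.symm ▸ hcon) with h | h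
      · exact h
      · exact absurd h (hne 0 ⟨le_rfl, hT0⟩)
    obtain ⟨c, hc, hgc⟩ := intermediate_value_Icc hT0 (E_continuous (s.erase i) l f).continuousOn
      (Set.mem_Icc.2 ⟨hg0.le, hgT.le⟩)
    exact hne c hc hgc

end NewtonAux

open NewtonAux

/-- If λ ∈ Γ⁺ₖ then σ_{k-1}(Λᵢ) ≥ σ_k(λ)/σ₁(λ) for every i. -/
theorem esymmErase_ge_div (n k : ℕ) (hn : 2 ≤ n) (hk1 : 1 ≤ k) (hkn : k ≤ n)
    (lam : Fin n → ℝ) (hlam : lam ∈ gammaPlus n k) (i : Fin n) :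
    esymmErase n (k - 1) i lam ≥ esymm n k lam / esymm n 1 lam := by
  have h1 : 0 < esymm n 1 lam := hlam 1 le_rfl hk1
  rw [ge_iff_le, div_le_iff₀ h1]
  obtain ⟨k', rfl⟩ : ∃ k', k = k' + 1 := ⟨k - 1, by omega⟩
  have hred : k' + 1 - 1 = k' := rfl
  rw [hred]
  set u := (Finset.univ : Finset (Fin n)).erase i with hu
  have hcard : k' + 1 ≤ (Finset.univ : Finset (Fin n)).card := by
    rw [card_univ, Fintype.card_fin]; exact hkn
  have hcardu : u.card = n - 1 := by
    rw [hu, card_erase_of_mem (mem_univ i), card_univ, Fintype.card_fin]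
  have hpos : ∀ r, 1 ≤ r → r ≤ k' + 1 → 0 < E Finset.univ r lam := fun r h1 h2 => hlam r h1 h2
  have key : E u (k' + 1) lam ≤ E u k' lam * E u 1 lam := by
    rcases Nat.eq_zero_or_pos k' with hk0 | hk0
    · subst hk0
      rw [E_zero, one_mul]
    · have hA : 0 < E u k' lam :=
        lemA (k' + 1) Finset.univ lam hcard hpos i (mem_univ i) k' le_rfl
      have hS1 : 0 < E u 1 lam :=
        lemA (k' + 1) Finset.univ lam hcard hpos i (mem_univ i) 1 (by omega)
      by_cases hB : E u (k' + 1) lam ≤ 0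
      · nlinarith
      push_neg at hB
      have hcardu2 : k' + 1 ≤ u.card := by
        by_contra hcc
        rw [E_of_card_lt lam (by omega)] at hB
        exact lt_irrefl 0 hB
      have hΓu : ∀ r, 1 ≤ r → r ≤ k' + 1 → 0 < E u r lam := by
        intro r hr1 hr2
        rcases Nat.lt_or_ge r (k' + 1) with h | h
        · exact lemA (k' + 1) Finset.univ lam hcard hpos i (mem_univ i) r (by omega)
        · have : r = k' + 1 := by omega
          subst this
          exact hB
      have hk'e : k' = (k' - 1) + 1 := by omega
      have hid : E u 1 lam * E u k' lam
          = (∑ j ∈ u, lam j ^ 2 * E (u.erase j) (k' - 1) lam)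
            + ((k' : ℝ) + 1) * E u (k' + 1) lam := by
        rw [E_one, sum_mul, ← E_sum_mul u lam k']
        rw [← sum_add_distrib]
        refine sum_congr rfl fun j hj => ?_
        calc lam j * E u k' lam
            = lam j * (lam j * E (u.erase j) (k' - 1) lam + E (u.erase j) ((k' - 1) + 1) lam) := by
              rw [← E_erase hj (k' - 1) lam, ← hk'e]
          _ = lam j ^ 2 * E (u.erase j) (k' - 1) lam + lam j * E (u.erase j) k' lam := by
              rw [← hk'e]; ring
      have hS : 0 ≤ ∑ j ∈ u, lam j ^ 2 * E (u.erase j) (k' - 1) lam := by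
        apply sum_nonneg
        intro j hj
        have := lemA (k' + 1) u lam hcardu2 hΓu j hj (k' - 1) (by omega)
        nlinarith [sq_nonneg (lam j)]
      nlinarith
  have hdel : E Finset.univ (k' + 1) lam
      = lam i * E u k' lam + E u (k' + 1) lam := E_erase (mem_univ i) k' lam
  have hone : E Finset.univ 1 lam = lam i + E u 1 lam := by
    rw [E_one, E_one, ← Finset.add_sum_erase _ lam (mem_univ i)]
  show E Finset.univ (k' + 1) lam ≤ E u k' lam * E Finset.univ 1 lam
  rw [hdel, hone]
  nlinarith [key]
end

section
/- Let n ≥ 2 and 2 ≤ k ≤ n. The function S(λ) = C(n,k)^{-1/k}·σ_k(λ)^{1/k} on Γ⁺_k satisfies ∂S/∂λ_i ≥ (1/k)·S(λ)/σ₁(λ) for every i and every λ ∈ Γ⁺_k. -/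
open Finset

namespace SCond

section MultisetLemmas

open Multiset Polynomial

lemma esymm_zero' (s : Multiset ℝ) : s.esymm 0 = 1 := by
  simp [Multiset.esymm]

lemma esymm_cons (a : ℝ) (s : Multiset ℝ) (j : ℕ) :
    (a ::ₘ s).esymm (j + 1) = s.esymm (j + 1) + a * s.esymm j := by
  rw [Multiset.esymm, Multiset.powersetCard_cons, Multiset.map_add, Multiset.sum_add,
    Multiset.map_map]
  rw [Multiset.esymm, Multiset.esymm]
  congr 1
  rw [← Multiset.sum_map_mul_left]
  congr 1
  apply Multiset.map_congr rfl
  intro t _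
  simp [Multiset.prod_cons]

lemma esymm_one' (s : Multiset ℝ) : s.esymm 1 = s.sum := by
  rw [Multiset.esymm, Multiset.powersetCard_one, Multiset.map_map]
  simp [Function.comp]

lemma esymm_of_card_lt {s : Multiset ℝ} {j : ℕ} (h : Multiset.card s < j) : s.esymm j = 0 := by
  rw [Multiset.esymm, Multiset.powersetCard_eq_empty _ h]
  simp

lemma esymm_card (s : Multiset ℝ) : s.esymm (Multiset.card s) = s.prod := by
  induction s using Multiset.induction with
  | empty => simp [esymm_zero']
  | cons a s ih =>
      rw [Multiset.card_cons, esymm_cons, esymm_of_card_lt (by simp), ih]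
      simp [Multiset.prod_cons]

lemma sum_pos' {s : Multiset ℝ} (h : ∀ x ∈ s, 0 < x) (hs : s ≠ 0) : 0 < s.sum := by
  induction s using Multiset.induction with
  | empty => exact absurd rfl hs
  | cons a s ih =>
      rw [Multiset.sum_cons]
      rcases eq_or_ne s 0 with rfl | hne
      · simpa using h a (by simp)
      · exact add_pos (h a (by simp)) (ih (fun x hx => h x (by simp [hx])) hne)

lemma single_le_sum' {s : Multiset ℝ} (h : ∀ x ∈ s, 0 ≤ x) {a : ℝ} (ha : a ∈ s) :
    a ≤ s.sum := by
  induction s using Multiset.induction with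
  | empty => simp at ha
  | cons b s ih =>
      rw [Multiset.sum_cons]
      rcases Multiset.mem_cons.1 ha with rfl | ha'
      · have : 0 ≤ s.sum := Multiset.sum_nonneg (fun x hx => h x (by simp [hx]))
        linarith
      · have hb : 0 ≤ b := h b (by simp)
        have := ih (fun x hx => h x (by simp [hx])) ha'
        linarith

lemma esymm_pos {s : Multiset ℝ} (h : ∀ x ∈ s, 0 < x) {j : ℕ} (hj : j ≤ Multiset.card s) :
    0 < s.esymm j := by
  rw [Multiset.esymm]
  apply sum_pos'
  · intro x hx
    rcases Multiset.mem_map.1 hx with ⟨t, ht, rfl⟩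
    rcases Multiset.mem_powersetCard.1 ht with ⟨hle, _⟩
    exact Multiset.prod_pos (fun y hy => h y (Multiset.mem_of_le hle hy))
  · intro hc
    have h2 : s.powersetCard j = 0 := by rwa [Multiset.map_eq_zero] at hc
    have h3 := Multiset.card_powersetCard j s
    rw [h2, Multiset.card_zero] at h3
    exact absurd h3.symm (Nat.choose_pos hj).ne'

/-- splitting off one element: `σ_{j+1}(M) = a·σ_j(M\a) + σ_{j+1}(M\a)` -/
lemma esymm_erase (a : ℝ) {s : Multiset ℝ} (ha : a ∈ s) (j : ℕ) :
    s.esymm (j + 1) = (s.erase a).esymm (j + 1) + a * (s.erase a).esymm j := by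
  conv_lhs => rw [← Multiset.cons_erase ha]
  exact esymm_cons a _ j

/-- double counting: `∑_{b∈s} b·σ_j(s\b) = (j+1)·σ_{j+1}(s)` -/
lemma sum_mul_esymm_erase (s : Multiset ℝ) (j : ℕ) :
    (s.map (fun b => b * (s.erase b).esymm j)).sum = (j + 1 : ℝ) * s.esymm (j + 1) := by
  induction s using Multiset.induction generalizing j with
  | empty => simp [esymm_of_card_lt]; exact Or.inr (esymm_of_card_lt (by simp))
  | cons a s ih =>
      rw [Multiset.map_cons, Multiset.sum_cons]
      have h1 : (a ::ₘ s).erase a = s := Multiset.erase_cons_head a s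
      have h2 : Multiset.map (fun b => b * ((a ::ₘ s).erase b).esymm j) s
          = Multiset.map (fun b => b * (a ::ₘ (s.erase b)).esymm j) s := by
        apply Multiset.map_congr rfl
        intro b hb
        have he : (a ::ₘ s).erase b = a ::ₘ s.erase b := by
          rcases eq_or_ne b a with rfl | hba
          · rw [Multiset.erase_cons_head, Multiset.cons_erase hb]
          · exact Multiset.erase_cons_tail s (Ne.symm hba)
        rw [he]
      rw [h1, h2]
      rcases Nat.eq_zero_or_pos j with rfl | hj
      · simp only [esymm_zero', mul_one, Multiset.map_id']
        rw [show (0:ℕ)+1 = 1 from rfl, esymm_one', Multiset.sum_cons]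
        push_cast
        ring
      · obtain ⟨j', rfl⟩ : ∃ j', j = j' + 1 := ⟨j - 1, (Nat.succ_pred_eq_of_pos hj).symm⟩
        have h3 : Multiset.map (fun b => b * (a ::ₘ s.erase b).esymm (j' + 1)) s
            = Multiset.map (fun b => b * (s.erase b).esymm (j' + 1)
                + a * (b * (s.erase b).esymm j')) s := by
          apply Multiset.map_congr rfl
          intro b _
          rw [esymm_cons]
          ring
        rw [h3, Multiset.sum_map_add]
        have h4 := ih (j := j' + 1)
        have h5 := ih (j := j')
        rw [Multiset.sum_map_mul_left, h4, h5, esymm_cons]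
        push_cast
        ring

/-- `(∑ z)² = ∑ z² + 2σ₂` -/
lemma sq_sum_eq (s : Multiset ℝ) :
    s.sum ^ 2 = (s.map (fun x => x ^ 2)).sum + 2 * s.esymm 2 := by
  induction s using Multiset.induction with
  | empty => simp [esymm_of_card_lt]; exact esymm_of_card_lt (by simp)
  | cons a s ih =>
      rw [Multiset.sum_cons, Multiset.map_cons, Multiset.sum_cons,
        show (2:ℕ) = 1 + 1 from rfl, esymm_cons, esymm_one']
      rw [show (1:ℕ) + 1 = 2 from rfl] at *
      nlinarith [ih]

/-- inversion: `σ_i(s) = (∏ s)·σ_j(s⁻¹)` when `i + j = card s`. -/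
lemma esymm_inv (s : Multiset ℝ) (h0 : ∀ x ∈ s, x ≠ 0) :
    ∀ i j : ℕ, i + j = Multiset.card s →
      s.esymm i = s.prod * (s.map (fun x => x⁻¹)).esymm j := by
  induction s using Multiset.induction with
  | empty =>
      intro i j hij
      simp only [Multiset.card_zero] at hij
      obtain ⟨rfl, rfl⟩ : i = 0 ∧ j = 0 := by omega
      simp [esymm_zero']
  | cons a s ih =>
      intro i j hij
      have ha : a ≠ 0 := h0 a (by simp)
      have h0' : ∀ x ∈ s, x ≠ 0 := fun x hx => h0 x (by simp [hx])
      rw [Multiset.map_cons, Multiset.prod_cons, Multiset.card_cons] at *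
      rcases Nat.eq_zero_or_pos j with rfl | hj
      · -- i = card s + 1
        have hi : i = Multiset.card s + 1 := by omega
        subst hi
        rw [esymm_cons, esymm_of_card_lt (by simp), esymm_zero', mul_one]
        have h := ih h0' (Multiset.card s) 0 (by omega)
        rw [esymm_zero', mul_one] at h
        rw [h]; ring
      · obtain ⟨j', rfl⟩ : ∃ j', j = j' + 1 := ⟨j - 1, by omega⟩
        rcases Nat.eq_zero_or_pos i with rfl | hi
        · -- j' + 1 = card s + 1
          have hprod : s.prod ≠ 0 := Multiset.prod_ne_zero (fun h => (h0' 0 h) rfl)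
          rw [esymm_zero', esymm_cons,
            esymm_of_card_lt (by rw [Multiset.card_map]; omega), zero_add]
          have h := ih h0' 0 j' (by omega)
          rw [esymm_zero'] at h
          have hX : (Multiset.map (fun x => x⁻¹) s).esymm j' = s.prod⁻¹ := by
            field_simp at h ⊢; linarith
          rw [hX]
          field_simp
        · obtain ⟨i', rfl⟩ : ∃ i', i = i' + 1 := ⟨i - 1, by omega⟩
          rw [esymm_cons, esymm_cons,
            ih h0' (i' + 1) j' (by omega), ih h0' i' (j' + 1) (by omega)]
          field_simp
          ring

/-- the polynomial `∏_{a∈s} (X + a)` -/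
noncomputable def pOf (s : Multiset ℝ) : Polynomial ℝ :=
  (s.map (fun a => Polynomial.X + Polynomial.C a)).prod

lemma pOf_monic (s : Multiset ℝ) : (pOf s).Monic := by
  apply monic_multiset_prod_of_monic
  intro a _
  exact monic_X_add_C a

lemma pOf_natDegree (s : Multiset ℝ) : (pOf s).natDegree = Multiset.card s := by
  rw [pOf, natDegree_multiset_prod_of_monic]
  · simp [Multiset.map_map, Function.comp, natDegree_X_add_C]
  · intro f hf
    rcases Multiset.mem_map.1 hf with ⟨a, _, rfl⟩
    exact monic_X_add_C a

lemma pOf_coeff (s : Multiset ℝ) {i : ℕ} (hi : i ≤ Multiset.card s) :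
    (pOf s).coeff i = s.esymm (Multiset.card s - i) :=
  Multiset.prod_X_add_C_coeff s hi

lemma pOf_splits (s : Multiset ℝ) : Splits (pOf s) := by
  induction s using Multiset.induction with
  | empty => simpa [pOf] using (Splits.one : Splits (1 : Polynomial ℝ))
  | cons a s ih =>
      rw [pOf, Multiset.map_cons, Multiset.prod_cons]
      exact Splits.mul (Splits.of_natDegree_le_one (by simp [natDegree_X_add_C])) ih

/-- Rolle: derived multiset with rescaled elementary symmetric functions. -/
lemma exists_derived (s : Multiset ℝ) (h2 : 2 ≤ Multiset.card s) :
    ∃ N : Multiset ℝ, Multiset.card N = Multiset.card s - 1 ∧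
      ∀ i ≤ Multiset.card s - 1,
        (Multiset.card s : ℝ) * N.esymm i
          = ((Multiset.card s - i : ℕ) : ℝ) * s.esymm i := by
  set m := Multiset.card s with hm
  set p := pOf s with hp
  have hpm : p.Monic := pOf_monic s
  have hpd : p.natDegree = m := pOf_natDegree s
  have hproots : Multiset.card p.roots = m := by
    rw [← hpd]; exact (splits_iff_card_roots).1 (pOf_splits s)
  set q := derivative p with hq
  have hqc : ∀ i : ℕ, q.coeff i = p.coeff (i + 1) * (i + 1) := fun i => coeff_derivative p i
  have hqtop : q.coeff (m - 1) = (m : ℝ) := by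
    rw [hqc, Nat.sub_add_cancel (by omega)]
    have : p.coeff m = 1 := by
      have := hpm; rw [Polynomial.Monic, Polynomial.leadingCoeff, hpd] at this; exact this
    rw [this, one_mul]
    push_cast [Nat.cast_sub (by omega : 1 ≤ m)]
    ring
  have hq0 : q ≠ 0 := by
    intro h
    rw [h, coeff_zero] at hqtop
    have hne : (m:ℝ) ≠ 0 := by exact_mod_cast (by omega : m ≠ 0)
    exact hne hqtop.symm
  have hqdeg : q.natDegree = m - 1 := by
    have hle : q.natDegree ≤ m - 1 := hpd ▸ natDegree_derivative_le p
    have : m - 1 ≤ q.natDegree := le_natDegree_of_ne_zero (by rw [hqtop]; positivity)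
    omega
  have hqroots : Multiset.card q.roots = m - 1 := by
    have h1 : Multiset.card q.roots ≤ m - 1 := hqdeg ▸ card_roots' q
    have h2' : m ≤ Multiset.card q.roots + 1 := by
      have := card_roots_le_derivative p
      rw [hproots, ← hq] at this; omega
    omega
  have hqsplits : Splits q := splits_iff_card_roots.2 (by rw [hqroots, hqdeg])
  have hqlead : q.leadingCoeff = (m : ℝ) := by
    rw [Polynomial.leadingCoeff, hqdeg, hqtop]
  refine ⟨q.roots.map (fun r => -r), by simp [hqroots], ?_⟩
  intro i hi
  have key : q = Polynomial.C (m : ℝ) *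
      ((q.roots.map (fun r => -r)).map (fun a => Polynomial.X + Polynomial.C a)).prod := by
    have := hqsplits.eq_prod_roots
    rw [hqlead] at this
    conv_lhs => rw [this]
    congr 1
    rw [Multiset.map_map]
    congr 1
    apply Multiset.map_congr rfl
    intro r _
    simp [sub_eq_add_neg]
  -- compare coefficients at m - 1 - i
  have hcard : Multiset.card (q.roots.map (fun r => -r)) = m - 1 := by simp [hqroots]
  have hco : q.coeff (m - 1 - i) = (m:ℝ) * (q.roots.map (fun r => -r)).esymm i := by
    conv_lhs => rw [key]
    rw [coeff_C_mul]
    rw [Multiset.prod_X_add_C_coeff _ (by rw [hcard]; omega), hcard]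
    congr 2
    omega
  have hpc : p.coeff (m - 1 - i + 1) = s.esymm i := by
    rw [pOf_coeff s (by omega)]
    congr 1
    omega
  rw [← hco, hqc, hpc]
  have harith : ((m - 1 - i : ℕ) : ℝ) + 1 = ((m - i : ℕ) : ℝ) :=
    mod_cast congrArg (Nat.cast : ℕ → ℝ) (by omega : (m - 1 - i) + 1 = m - i)
  rw [harith]
  ring

/-- Newton's inequality, special case: `σ_j = 0 → σ_{j-1}·σ_{j+1} ≤ 0`. -/
lemma newton_special : ∀ (d j : ℕ), 1 ≤ j → ∀ s : Multiset ℝ,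
    Multiset.card s = j + 1 + d → s.esymm j = 0 →
    s.esymm (j - 1) * s.esymm (j + 1) ≤ 0 := by
  intro d
  induction d with
  | zero =>
      intro j hj s hcard hzero
      have hcard' : Multiset.card s = j + 1 := by omega
      have hprod : s.esymm (j + 1) = s.prod := by rw [← hcard', esymm_card]
      by_cases h0 : (0:ℝ) ∈ s
      · rw [hprod, Multiset.prod_eq_zero h0, mul_zero]
      · have hne : ∀ x ∈ s, x ≠ 0 := fun x hx hx0 => h0 (hx0 ▸ hx)
        have hpne : s.prod ≠ 0 := Multiset.prod_ne_zero h0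
        set z := s.map (fun x : ℝ => x⁻¹) with hz
        have e1 : s.esymm j = s.prod * z.esymm 1 := esymm_inv s hne j 1 (by omega)
        have e2 : s.esymm (j - 1) = s.prod * z.esymm 2 := by
          have := esymm_inv s hne (j - 1) 2 (by omega)
          exact this
        have hzsum : z.sum = 0 := by
          rw [hzero] at e1
          have := e1.symm
          rcases mul_eq_zero.1 this with h | h
          · exact absurd h hpne
          · rwa [esymm_one'] at h
        have hz2 : z.esymm 2 ≤ 0 := by
          have hsq := sq_sum_eq z
          rw [hzsum] at hsq
          have hnn : 0 ≤ (z.map (fun x => x ^ 2)).sum :=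
            Multiset.sum_nonneg (by
              intro x hx
              rcases Multiset.mem_map.1 hx with ⟨y, _, rfl⟩
              positivity)
          nlinarith
        rw [e2, hprod]
        nlinarith [sq_nonneg s.prod, mul_nonneg (mul_self_nonneg s.prod) (neg_nonneg.2 hz2)]
  | succ d ih =>
      intro j hj s hcard hzero
      obtain ⟨N, hNcard, hN⟩ := exists_derived s (by omega)
      have hc0 : (Multiset.card s : ℝ) ≠ 0 := by
        exact_mod_cast (by omega : Multiset.card s ≠ 0)
      have hNj : N.esymm j = 0 := by
        have := hN j (by omega)
        rw [hzero, mul_zero] at this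
        exact (mul_eq_zero.1 this).resolve_left hc0
      have hres := ih j hj N (by omega) hNj
      have h1 := hN (j - 1) (by omega)
      have h2 := hN (j + 1) (by omega)
      set c := (Multiset.card s : ℝ)
      set A := ((Multiset.card s - (j - 1) : ℕ) : ℝ) with hA
      set B := ((Multiset.card s - (j + 1) : ℕ) : ℝ) with hB
      have hApos : 0 < A := by rw [hA]; exact_mod_cast (by omega : 0 < Multiset.card s - (j-1))
      have hBpos : 0 < B := by rw [hB]; exact_mod_cast (by omega : 0 < Multiset.card s - (j+1))
      have key : c ^ 2 * (N.esymm (j-1) * N.esymm (j+1))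
          = A * B * (s.esymm (j-1) * s.esymm (j+1)) := by
        have := congrArg₂ (· * ·) h1 h2
        nlinarith [this]
      nlinarith [sq_nonneg c, mul_pos hApos hBpos,
        mul_nonneg (sq_nonneg c) (neg_nonneg.2 hres)]

/-- `σ_m(s + t)` is a polynomial in `t`: it equals `eval t` of a Hasse derivative of `pOf s`. -/
lemma esymm_shift_eq (s : Multiset ℝ) (m : ℕ) (hm : m ≤ Multiset.card s) (t : ℝ) :
    (s.map (fun x => x + t)).esymm m
      = (Polynomial.hasseDeriv (Multiset.card s - m) (pOf s)).eval t := by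
  have hcard : Multiset.card (s.map (fun x => x + t)) = Multiset.card s := by simp
  have h1 : (pOf (s.map (fun x => x + t))).coeff (Multiset.card s - m)
      = (s.map (fun x => x + t)).esymm m := by
    rw [pOf_coeff _ (by rw [hcard]; omega), hcard]
    congr 1
    omega
  have h2 : pOf (s.map (fun x => x + t)) = Polynomial.taylor t (pOf s) := by
    rw [pOf, Multiset.map_map, taylor_apply, pOf, multiset_prod_comp, Multiset.map_map]
    apply congrArg
    apply Multiset.map_congr rfl
    intro a _
    simp only [Function.comp_apply, add_comp, X_comp, C_comp, add_assoc, ← C_add]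
    rw [add_comm t a]
  rw [← h1, h2, taylor_coeff]

/-- shifting all entries up by `t ≥ 0` does not decrease `σ_m`, on Γ. -/
lemma esymm_shift_ge (s : Multiset ℝ) (m : ℕ) (hm : m ≤ Multiset.card s)
    (hpos : ∀ r, 1 ≤ r → r ≤ m → 0 < s.esymm r) {t : ℝ} (ht : 0 ≤ t) :
    s.esymm m ≤ (s.map (fun x => x + t)).esymm m := by
  set n' := Multiset.card s with hn'
  set q := Polynomial.hasseDeriv (n' - m) (pOf s) with hqdef
  have hcoeff : ∀ i : ℕ, q.coeff i
      = ((i + (n' - m)).choose (n' - m) : ℝ) * (pOf s).coeff (i + (n' - m)) := by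
    intro i
    rw [hqdef, Polynomial.hasseDeriv_coeff]
  have hnonneg : ∀ i : ℕ, 1 ≤ i → 0 ≤ q.coeff i := by
    intro i hi
    by_cases him : i ≤ m
    · rw [hcoeff, pOf_coeff _ (by omega : i + (n' - m) ≤ Multiset.card s)]
      have : Multiset.card s - (i + (n' - m)) = m - i := by omega
      rw [this]
      apply mul_nonneg (by positivity)
      rcases Nat.eq_zero_or_pos (m - i) with h | h
      · rw [h, esymm_zero']; norm_num
      · exact (hpos (m - i) h (by omega)).le
    · rw [hcoeff, Polynomial.coeff_eq_zero_of_natDegree_lt (by rw [pOf_natDegree]; omega),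
        mul_zero]
  have hc0 : q.coeff 0 = s.esymm m := by
    rw [hcoeff, zero_add, Nat.choose_self, Nat.cast_one, one_mul,
      pOf_coeff _ (by omega : n' - m ≤ Multiset.card s)]
    congr 1
    omega
  rw [esymm_shift_eq s m hm t, Polynomial.eval_eq_sum_range, Finset.sum_range_succ']
  have hlast : q.coeff 0 * t ^ 0 = s.esymm m := by rw [hc0, pow_zero, mul_one]
  have hsum : 0 ≤ ∑ i ∈ Finset.range q.natDegree, q.coeff (i + 1) * t ^ (i + 1) :=
    Finset.sum_nonneg fun i _ => mul_nonneg (hnonneg (i + 1) (by omega)) (pow_nonneg ht _)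
  rw [← hqdef]
  linarith

/-- Key cone lemma: on `Γ⁺_k`, erased elementary symmetric functions are positive. -/
lemma lemA : ∀ (k : ℕ), 1 ≤ k → ∀ M : Multiset ℝ, k ≤ Multiset.card M →
    (∀ m, 1 ≤ m → m ≤ k → 0 < M.esymm m) → ∀ a ∈ M, ∀ j, j ≤ k - 1 →
    0 < (M.erase a).esymm j := by
  intro k
  induction k using Nat.strong_induction_on with
  | _ k ih =>
  intro hk1 M hkcard hGamma a haM j hj
  rcases Nat.eq_zero_or_pos j with rfl | hj1
  · rw [esymm_zero']; norm_num
  rcases lt_or_eq_of_le hj with hlt | heq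
  · exact ih (j + 1) (by omega) (by omega) M (by omega)
      (fun m h1 h2 => hGamma m h1 (by omega)) a haM j (by omega)
  -- main case : j = k - 1, k ≥ 2
  have hkj : k = j + 1 := by omega
  subst hkj
  have hjpos : 1 ≤ j := hj1
  set n' := Multiset.card M with hn'
  set μ := M.erase a with hμ
  have hμcard : Multiset.card μ = n' - 1 := by
    rw [hμ, Multiset.card_erase_of_mem haM, Nat.pred_eq_sub_one]
  by_contra hcon
  push_neg at hcon
  -- the shift function
  set g : ℝ → ℝ := fun t => (Polynomial.hasseDeriv (Multiset.card μ - j) (pOf μ)).eval t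
    with hgdef
  have hgval : ∀ t : ℝ, g t = (μ.map (fun x => x + t)).esymm j := fun t =>
    (esymm_shift_eq μ j (by omega) t).symm
  have hgcont : Continuous g := by
    rw [hgdef]; exact Polynomial.continuous _
  have hg0 : g 0 ≤ 0 := by
    rw [hgval]
    have : μ.map (fun x => x + 0) = μ := by simp
    rw [this]
    exact hcon
  set T : ℝ := 1 + (M.map (fun x => |x|)).sum with hT
  have habs : ∀ x ∈ M, |x| ≤ (M.map (fun x => |x|)).sum := fun x hx =>
    single_le_sum' (fun y hy => by
      rcases Multiset.mem_map.1 hy with ⟨z, _, rfl⟩; positivity)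
      (Multiset.mem_map_of_mem _ hx)
  have hTpos : 0 < T := by
    have : 0 ≤ (M.map (fun x => |x|)).sum :=
      Multiset.sum_nonneg (fun y hy => by
        rcases Multiset.mem_map.1 hy with ⟨z, _, rfl⟩; positivity)
    rw [hT]; linarith
  have hshiftpos : ∀ x ∈ M, ∀ t : ℝ, T ≤ t → 0 < x + t := by
    intro x hx t htT
    have h1 := habs x hx
    have h2 : -|x| ≤ x := neg_abs_le x
    rw [hT] at htT
    linarith
  set A : Set ℝ := Set.Icc 0 T ∩ g ⁻¹' Set.Iic 0 with hA
  have hA0 : (0:ℝ) ∈ A := ⟨⟨le_refl _, hTpos.le⟩, hg0⟩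
  have hAcompact : IsCompact A :=
    isCompact_Icc.inter_right (isClosed_Iic.preimage hgcont)
  set t0 : ℝ := sSup A with ht0
  have ht0A : t0 ∈ A := hAcompact.sSup_mem ⟨0, hA0⟩
  have hbdd : BddAbove A := hAcompact.bddAbove
  have hgT : 0 < g T := by
    rw [hgval]
    apply esymm_pos
    · intro x hx
      rcases Multiset.mem_map.1 hx with ⟨y, hy, rfl⟩
      exact hshiftpos y (Multiset.mem_of_mem_erase hy) T le_rfl
    · rw [Multiset.card_map]; omega
  have ht0T : t0 < T := by
    rcases lt_or_eq_of_le ht0A.1.2 with h | h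
    · exact h
    · exact absurd (h ▸ ht0A.2) (not_le.2 hgT)
  have hgt0 : g t0 = 0 := by
    refine le_antisymm ht0A.2 ?_
    by_contra hneg
    push_neg at hneg
    have hcont := Metric.continuousAt_iff.1 (hgcont.continuousAt (x := t0)) (-g t0)
      (by linarith)
    obtain ⟨δ, hδpos, hδ⟩ := hcont
    set u := min T (t0 + δ / 2) with hu
    have hut0 : t0 < u := lt_min ht0T (by linarith)
    have huT : u ≤ T := min_le_left _ _
    have hdist : dist u t0 < δ := by
      rw [Real.dist_eq, abs_of_nonneg (by linarith)]
      have : u ≤ t0 + δ / 2 := min_le_right _ _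
      linarith
    have hgu : g u < 0 := by
      have := hδ hdist
      rw [Real.dist_eq] at this
      have := abs_lt.1 this
      linarith [this.2]
    have huA : u ∈ A := ⟨⟨by linarith [ht0A.1.1], huT⟩, hgu.le⟩
    exact absurd (le_csSup hbdd huA) (not_le.2 hut0)
  -- the shifted multisets
  set Ms : Multiset ℝ := M.map (fun x => x + t0) with hMs
  set μs : Multiset ℝ := μ.map (fun x => x + t0) with hμs
  have hMscard : Multiset.card Ms = n' := by rw [hMs, Multiset.card_map]
  have haMs : a + t0 ∈ Ms := Multiset.mem_map_of_mem _ haM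
  have herase : Ms.erase (a + t0) = μs := by
    rw [hMs, hμs, hμ, Multiset.map_erase _ (add_left_injective t0) a M]
  have hMsΓ : ∀ m, 1 ≤ m → m ≤ j + 1 → 0 < Ms.esymm m := by
    intro m h1 h2
    exact lt_of_lt_of_le (hGamma m h1 h2)
      (esymm_shift_ge M m (by omega) (fun r hr1 hr2 => hGamma r hr1 (by omega)) ht0A.1.1)

  have hμs_j : μs.esymm j = 0 := by
    rw [hμs, ← hgval t0]
    exact hgt0
  have hμscard : Multiset.card μs = n' - 1 := by rw [hμs, Multiset.card_map]; exact hμcard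
  have hμsk : 0 < μs.esymm (j + 1) := by
    have hsplit := esymm_erase (a + t0) haMs j
    rw [herase, hμs_j, mul_zero, add_zero] at hsplit
    rw [← hsplit]
    exact hMsΓ (j + 1) (by omega) le_rfl
  rcases eq_or_lt_of_le (show j + 1 ≤ n' from hkcard) with htop | hlt'
  · -- k = n' : impossible since esymm beyond card vanishes
    have : μs.esymm (j + 1) = 0 := esymm_of_card_lt (by omega)
    rw [this] at hμsk
    exact lt_irrefl _ hμsk
  · -- k < n' : Newton contradiction
    have hμsk2 : 0 < μs.esymm (j - 1) := by
      have := ih j (by omega) (by omega) Ms (by omega)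
        (fun m h1 h2 => hMsΓ m h1 (by omega)) (a + t0) haMs (j - 1) (by omega)
      rwa [herase] at this
    have hnewton := newton_special (n' - 1 - (j + 1)) j hjpos μs (by omega) hμs_j
    nlinarith [mul_pos hμsk2 hμsk]

/-- The key inequality: `σ_k(M) ≤ σ₁(M)·σ_{k-1}(M \ a)` on `Γ⁺_k`. -/
lemma key_ineq (k : ℕ) (hk : 2 ≤ k) (M : Multiset ℝ) (hcard : k ≤ Multiset.card M)
    (hGamma : ∀ m, 1 ≤ m → m ≤ k → 0 < M.esymm m) (a : ℝ) (ha : a ∈ M) :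
    M.esymm k ≤ M.esymm 1 * (M.erase a).esymm (k - 1) := by
  obtain ⟨k3, rfl⟩ : ∃ k3, k = k3 + 2 := ⟨k - 2, by omega⟩
  have hk1 : k3 + 2 - 1 = k3 + 1 := by omega
  rw [hk1]
  set μ := M.erase a with hμ
  have hμcard : Multiset.card μ = Multiset.card M - 1 := by
    rw [hμ, Multiset.card_erase_of_mem ha, Nat.pred_eq_sub_one]
  have hμΓ : ∀ m, 1 ≤ m → m ≤ k3 + 1 → 0 < μ.esymm m := by
    intro m h1 h2
    exact lemA (k3 + 2) (by omega) M hcard hGamma a ha m (by omega)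
  have hμsum : 0 < μ.sum := by rw [← esymm_one']; exact hμΓ 1 le_rfl (by omega)
  have hμtop : 0 < μ.esymm (k3 + 1) := hμΓ (k3 + 1) (by omega) le_rfl
  -- identity : μ.sum * σ_{k3+1}(μ) = ∑_b b²·σ_{k3}(μ\b) + (k3+2)·σ_{k3+2}(μ)
  have hident : μ.sum * μ.esymm (k3 + 1)
      = (μ.map (fun b => b ^ 2 * (μ.erase b).esymm k3)).sum
        + (k3 + 2 : ℝ) * μ.esymm (k3 + 2) := by
    have h1 : μ.sum * μ.esymm (k3 + 1)
        = (μ.map (fun b => b * μ.esymm (k3 + 1))).sum := by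
      rw [Multiset.sum_map_mul_right, Multiset.map_id']
    rw [h1]
    have h2 : μ.map (fun b => b * μ.esymm (k3 + 1))
        = μ.map (fun b => b ^ 2 * (μ.erase b).esymm k3
            + b * (μ.erase b).esymm (k3 + 1)) := by
      apply Multiset.map_congr rfl
      intro b hb
      rw [esymm_erase b hb k3]
      ring
    rw [h2, Multiset.sum_map_add, sum_mul_esymm_erase μ (k3 + 1)]
    push_cast
    ring
  have hquad : 0 ≤ (μ.map (fun b => b ^ 2 * (μ.erase b).esymm k3)).sum := by
    apply Multiset.sum_nonneg
    intro x hx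
    rcases Multiset.mem_map.1 hx with ⟨b, hb, rfl⟩
    have : 0 < (μ.erase b).esymm k3 :=
      lemA (k3 + 1) (by omega) μ (by omega) hμΓ b hb k3 (by omega)
    positivity
  have hmain : μ.esymm (k3 + 2) ≤ μ.sum * μ.esymm (k3 + 1) := by
    rcases le_or_gt (μ.esymm (k3 + 2)) 0 with h | h
    · exact le_trans h (mul_pos hμsum hμtop).le
    · nlinarith
  have hsum1 : M.esymm 1 = a + μ.sum := by
    rw [esymm_one']
    conv_lhs => rw [← Multiset.cons_erase ha]
    rw [Multiset.sum_cons]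
  have hsplitM : M.esymm (k3 + 2) = μ.esymm (k3 + 2) + a * μ.esymm (k3 + 1) :=
    esymm_erase a ha (k3 + 1)
  rw [hsum1, hsplitM]
  nlinarith [hmain]

end MultisetLemmas

section Bridge

variable {n : ℕ} (lam : Fin n → ℝ)

lemma esymm_eq (m : ℕ) :
    (Multiset.map lam Finset.univ.val).esymm m = esymm n m lam := by
  rw [Finset.esymm_map_val]
  rfl

lemma esymmErase_eq (i : Fin n) (m : ℕ) :
    (Multiset.map lam (Finset.univ.erase i).val).esymm m = esymmErase n m i lam := by
  rw [Finset.esymm_map_val]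
  rfl

lemma erase_bridge (i : Fin n) :
    (Multiset.map lam Finset.univ.val).erase (lam i)
      = Multiset.map lam ((Finset.univ.erase i).val) := by
  have h1 : (Finset.univ : Finset (Fin n)).val = i ::ₘ (Finset.univ.erase i).val := by
    conv_lhs => rw [← Finset.insert_erase (Finset.mem_univ i)]
    rw [Finset.insert_val_of_notMem (Finset.notMem_erase i _)]
  rw [h1, Multiset.map_cons, Multiset.erase_cons_head]

/-- The main inequality transported to `Fin n` functions. -/
lemma key_ineq' (k : ℕ) (hk : 2 ≤ k) (hkn : k ≤ n) (hlam : lam ∈ gammaPlus n k)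
    (i : Fin n) :
    esymm n k lam ≤ esymm n 1 lam * esymmErase n (k - 1) i lam := by
  have hcard : Multiset.card (Multiset.map lam Finset.univ.val) = n := by simp
  have h := key_ineq k hk (Multiset.map lam Finset.univ.val) (by omega)
    (fun m h1 h2 => by rw [esymm_eq]; exact hlam m h1 h2) (lam i)
    (Multiset.mem_map_of_mem _ (Finset.mem_univ_val i))
  rwa [esymm_eq, esymm_eq, erase_bridge, esymmErase_eq] at h

end Bridge

section Calc

variable {n : ℕ}

/-- derivative of `esymm` in coordinate direction `i`. -/
lemma esymm_hasFDerivAt (k : ℕ) (lam : Fin n → ℝ) :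
    HasFDerivAt (fun x : Fin n → ℝ => esymm n k x)
      (∑ s ∈ Finset.univ.powersetCard k, ∑ j ∈ s,
        (∏ l ∈ s.erase j, lam l) • (ContinuousLinearMap.proj (R := ℝ)
          (φ := fun _ : Fin n => ℝ) j)) lam := by
  apply HasFDerivAt.fun_sum
  intro s _
  exact HasFDerivAt.finset_prod (fun j _ => hasFDerivAt_apply j lam)

lemma deriv_apply_single (k : ℕ) (hk : 1 ≤ k) (lam : Fin n → ℝ) (i : Fin n) :
    (∑ s ∈ Finset.univ.powersetCard k, ∑ j ∈ s,
        (∏ l ∈ s.erase j, lam l) • (ContinuousLinearMap.proj (R := ℝ)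
          (φ := fun _ : Fin n => ℝ) j)) (Pi.single i 1)
      = esymmErase n (k - 1) i lam := by
  classical
  rw [ContinuousLinearMap.sum_apply]
  have hinner : ∀ s ∈ Finset.univ.powersetCard k,
      (∑ j ∈ s, (∏ l ∈ s.erase j, lam l) • (ContinuousLinearMap.proj (R := ℝ)
        (φ := fun _ : Fin n => ℝ) j)) (Pi.single i 1)
      = if i ∈ s then ∏ l ∈ s.erase i, lam l else 0 := by
    intro s _
    rw [ContinuousLinearMap.sum_apply]
    have : ∀ j ∈ s, ((∏ l ∈ s.erase j, lam l) • (ContinuousLinearMap.proj (R := ℝ)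
        (φ := fun _ : Fin n => ℝ) j)) (Pi.single i 1)
        = if j = i then ∏ l ∈ s.erase j, lam l else 0 := by
      intro j _
      rw [ContinuousLinearMap.smul_apply, ContinuousLinearMap.proj_apply,
        Pi.single_apply]
      split <;> simp
    rw [Finset.sum_congr rfl this, Finset.sum_ite_eq' s i (fun j => ∏ l ∈ s.erase j, lam l)]
  rw [Finset.sum_congr rfl hinner, ← Finset.sum_filter]
  rw [esymmErase]
  apply Finset.sum_nbij' (i := fun s => s.erase i) (j := fun t => insert i t)
  · intro s hs
    rw [Finset.mem_filter, Finset.mem_powersetCard_univ] at hs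
    rw [Finset.mem_powersetCard]
    constructor
    · intro x hx
      rw [Finset.mem_erase] at hx ⊢
      exact ⟨hx.1, Finset.mem_univ x⟩
    · rw [Finset.card_erase_of_mem hs.2, hs.1]
  · intro t ht
    rw [Finset.mem_powersetCard] at ht
    rw [Finset.mem_filter, Finset.mem_powersetCard_univ]
    have hit : i ∉ t := fun hit => (Finset.mem_erase.1 (ht.1 hit)).1 rfl
    constructor
    · rw [Finset.card_insert_of_notMem hit, ht.2]
      omega
    · exact Finset.mem_insert_self i t
  · intro s hs
    rw [Finset.mem_filter] at hs
    exact Finset.insert_erase hs.2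
  · intro t ht
    rw [Finset.mem_powersetCard] at ht
    exact Finset.erase_insert (fun hit => (Finset.mem_erase.1 (ht.1 hit)).1 rfl)
  · intro s _
    rfl

end Calc

end SCond

/-- S = C(n,k)^{-1/k}·σ_k^{1/k} satisfies (S3): ∂S/∂λᵢ ≥ (1/k)·S/σ₁ on Γ⁺ₖ. -/
theorem S_condition_S3 (n k : ℕ) (hn : 2 ≤ n) (hk : 2 ≤ k) (hkn : k ≤ n)
    (lam : Fin n → ℝ) (hlam : lam ∈ gammaPlus n k) (i : Fin n) :
    fderiv ℝ
        (fun x : Fin n → ℝ =>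
          ((n.choose k : ℝ) ^ (-(1 : ℝ) / k)) * (esymm n k x) ^ ((1 : ℝ) / k))
        lam (Pi.single i 1) ≥
      (1 / (k : ℝ)) *
        (((n.choose k : ℝ) ^ (-(1 : ℝ) / k)) * (esymm n k lam) ^ ((1 : ℝ) / k)) /
          esymm n 1 lam := by
  classical
  have σpos : 0 < esymm n k lam := hlam k (by omega) le_rfl
  have σ1pos : 0 < esymm n 1 lam := hlam 1 le_rfl (by omega)
  set σ := esymm n k lam with hσ
  set σ1 := esymm n 1 lam with hσ1
  set p : ℝ := (1 : ℝ) / k with hp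
  set c : ℝ := (n.choose k : ℝ) ^ (-(1 : ℝ) / k) with hc
  have hkpos : (0:ℝ) < k := by positivity
  have hppos : 0 < p := by rw [hp]; positivity
  have hcpos : 0 < c := by
    rw [hc]
    apply Real.rpow_pos_of_pos
    exact_mod_cast Nat.choose_pos hkn
  have hG := SCond.esymm_hasFDerivAt (n := n) k lam
  have hrpow : HasDerivAt (fun y : ℝ => y ^ p) (p * σ ^ (p - 1)) σ :=
    Real.hasDerivAt_rpow_const (Or.inl σpos.ne')
  have hcomp := hrpow.comp_hasFDerivAt lam hG
  have hS0 := hcomp.const_mul c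
  have hS : HasFDerivAt
      (fun x : Fin n → ℝ => c * (esymm n k x) ^ p)
      (c • (p * σ ^ (p - 1)) • ∑ s ∈ powersetCard k univ, ∑ j ∈ s,
        (∏ l ∈ s.erase j, lam l) • ContinuousLinearMap.proj (R := ℝ)
          (φ := fun _ : Fin n => ℝ) j) lam := hS0
  rw [hS.fderiv]
  rw [ContinuousLinearMap.smul_apply, ContinuousLinearMap.smul_apply,
    SCond.deriv_apply_single k (by omega) lam i]
  set E := esymmErase n (k - 1) i lam with hE
  have hkey : σ ≤ σ1 * E := SCond.key_ineq' lam k hk hkn hlam i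
  have hσppos : 0 < σ ^ (p - 1) := Real.rpow_pos_of_pos σpos _
  have hEpos : 0 < E := by
    have h1 : 0 < σ1 * E := lt_of_lt_of_le σpos hkey
    nlinarith
  rw [ge_iff_le, div_le_iff₀ σ1pos]
  have hpow : σ ^ (p - 1) * σ = σ ^ p := by
    rw [Real.rpow_sub σpos, Real.rpow_one]
    field_simp
  have h2 : c * (p * σ ^ (p - 1)) * σ ≤ c * (p * σ ^ (p - 1)) * (σ1 * E) :=
    mul_le_mul_of_nonneg_left hkey (by positivity)
  have h3 : c * (p * σ ^ (p - 1)) * σ = p * (c * σ ^ p) := by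
    rw [← hpow]
    ring
  calc p * (c * σ ^ p) = c * (p * σ ^ (p - 1)) * σ := h3.symm
    _ ≤ c * (p * σ ^ (p - 1)) * (σ1 * E) := h2
    _ = c * (p * σ ^ (p - 1) * E) * σ1 := by ring
end

section
/- For 1 ≤ k ≤ n and λ ∈ Γ⁺_k, we have ∂σ_k(λ)/∂λ_i = σ_{k-1}(Λ_i) > 0 for all i; i.e., σ_k is strictly increasing in each variable on Γ⁺_k. -/
open Finset

section Aux

open Polynomial

set_option linter.unusedSectionVars false
set_option linter.unusedVariables false

variable {ι : Type*} [DecidableEq ι]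

/-- elementary symmetric sum over a finset -/
noncomputable def Esum (s : Finset ι) (k : ℕ) (μ : ι → ℝ) : ℝ :=
  ∑ t ∈ s.powersetCard k, ∏ j ∈ t, μ j

lemma Esum_zero (s : Finset ι) (μ : ι → ℝ) : Esum s 0 μ = 1 := by
  simp [Esum]

lemma Esum_of_card_lt {s : Finset ι} {k : ℕ} (h : s.card < k) (μ : ι → ℝ) :
    Esum s k μ = 0 := by
  simp [Esum, Finset.powersetCard_eq_empty.2 h]

lemma Esum_recur {s : Finset ι} {i : ι} (hi : i ∈ s) (k : ℕ) (μ : ι → ℝ) :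
    Esum s (k+1) μ = μ i * Esum (s.erase i) k μ + Esum (s.erase i) (k+1) μ := by
  classical
  have h1 : s = insert i (s.erase i) := (Finset.insert_erase hi).symm
  have h2 : i ∉ s.erase i := Finset.notMem_erase _ _
  rw [Esum]
  conv_lhs => rw [h1]
  rw [Finset.powersetCard_succ_insert h2, Finset.sum_union ?_]
  · have himg : ∑ t ∈ (Finset.powersetCard k (s.erase i)).image (insert i),
        ∏ j ∈ t, μ j = μ i * Esum (s.erase i) k μ := by
      rw [Esum, Finset.mul_sum, Finset.sum_image ?_]
      · refine Finset.sum_congr rfl fun t ht => ?_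
        rw [Finset.mem_powersetCard] at ht
        rw [Finset.prod_insert fun hit => h2 (ht.1 hit)]
      · intro t ht u hu htu
        rw [Finset.mem_coe, Finset.mem_powersetCard] at ht hu
        have he : ∀ v : Finset ι, v ⊆ s.erase i → (insert i v).erase i = v := by
          intro v hv
          rw [Finset.erase_insert]
          exact fun hiv => h2 (hv hiv)
        rw [← he t ht.1, ← he u hu.1, htu]
    rw [himg, add_comm]; rfl
  · rw [Finset.disjoint_left]
    intro t ht htim
    rw [Finset.mem_powersetCard] at ht
    rw [Finset.mem_image] at htim
    obtain ⟨u, hu, rfl⟩ := htim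
    exact h2 (ht.1 (Finset.mem_insert_self i u))

lemma Esum_erase_nonpos {s : Finset ι} {i : ι} (hi : i ∈ s) {μ : ι → ℝ} (hμi : μ i ≤ 0)
    {k : ℕ} (hpos : ∀ j, 1 ≤ j → j ≤ k → 0 < Esum s j μ) :
    ∀ j, j ≤ k → Esum s j μ ≤ Esum (s.erase i) j μ ∧ 0 < Esum (s.erase i) j μ := by
  intro j
  induction j with
  | zero => intro _; rw [Esum_zero, Esum_zero]; exact ⟨le_refl _, one_pos⟩
  | succ j ih =>
    intro hjk
    have hj := ih (le_of_lt (Nat.lt_of_succ_le hjk))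
    have hrec := Esum_recur hi j μ
    have hsle : Esum s (j+1) μ ≤ Esum (s.erase i) (j+1) μ := by nlinarith [hj.1, hj.2]
    exact ⟨hsle, lt_of_lt_of_le (hpos (j+1) (Nat.succ_le_succ (Nat.zero_le _)) hjk) hsle⟩

-- derivative preserves "all roots real"
lemma stepRR {q : ℝ[X]} (hq : (q.roots).card = q.natDegree) (h1 : 1 ≤ q.natDegree) :
    ((derivative q).roots).card = (derivative q).natDegree ∧
      q.natDegree - 1 ≤ (derivative q).natDegree := by
  have hlow : q.natDegree - 1 ≤ (q.derivative.roots).card := by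
    have := q.card_roots_le_derivative
    omega
  have hub : (derivative q).natDegree ≤ q.natDegree - 1 :=
    Nat.le_sub_one_of_lt (natDegree_derivative_lt (by omega))
  have := (derivative q).card_roots'
  omega

lemma iterRR {q : ℝ[X]} (hq : (q.roots).card = q.natDegree) :
    ∀ j, j ≤ q.natDegree →
      ((derivative^[j] q).roots).card = (derivative^[j] q).natDegree ∧
        q.natDegree - j ≤ (derivative^[j] q).natDegree := by
  intro j
  induction j with
  | zero => intro _; exact ⟨hq, le_refl _⟩
  | succ j ih =>
    intro hjk
    have hj := ih (by omega)
    rw [Function.iterate_succ_apply']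
    have hstep := stepRR hj.1 (by omega)
    exact ⟨hstep.1, by omega⟩

lemma fact_ineq (a : ℕ) : (a+1).factorial * (a+1).factorial ≤ a.factorial * (a+2).factorial := by
  have h1 : (a+2).factorial = (a+2) * (a+1).factorial := Nat.factorial_succ (a+1)
  have h2 : (a+1).factorial = (a+1) * a.factorial := Nat.factorial_succ a
  calc (a+1).factorial * (a+1).factorial = (a+1) * (a.factorial * (a+1).factorial) := by rw [h2]; ring
    _ ≤ (a+2) * (a.factorial * (a+1).factorial) := Nat.mul_le_mul_right _ (by omega)
    _ = a.factorial * (a+2).factorial := by rw [h1]; ring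

lemma nat_newton_const (a b : ℕ) :
    ((a+1).descFactorial a * (b+1).descFactorial b)^2 ≤
      4 * ((a+2).descFactorial a * b.descFactorial b) *
        (a.descFactorial a * (b+2).descFactorial b) := by
  have h1 : (a+1).descFactorial a = (a+1).factorial := by
    have h := Nat.factorial_mul_descFactorial (Nat.le_succ a)
    rw [show a + 1 - a = 1 by omega, Nat.factorial_one, one_mul] at h
    exact h
  have h2 : 2 * (a+2).descFactorial a = (a+2).factorial := by
    have h := Nat.factorial_mul_descFactorial (show a ≤ a + 2 by omega)
    rw [show a + 2 - a = 2 by omega, Nat.factorial_two] at h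
    exact h
  have h3 : (b+1).descFactorial b = (b+1).factorial := by
    have h := Nat.factorial_mul_descFactorial (Nat.le_succ b)
    rw [show b + 1 - b = 1 by omega, Nat.factorial_one, one_mul] at h
    exact h
  have h4 : 2 * (b+2).descFactorial b = (b+2).factorial := by
    have h := Nat.factorial_mul_descFactorial (show b ≤ b + 2 by omega)
    rw [show b + 2 - b = 2 by omega, Nat.factorial_two] at h
    exact h
  have h5 : a.descFactorial a = a.factorial := Nat.descFactorial_self a
  have h6 : b.descFactorial b = b.factorial := Nat.descFactorial_self b
  have key : ((a+1).factorial * (b+1).factorial)^2 ≤ ((a+2).factorial * b.factorial) * (a.factorial * (b+2).factorial) := by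
    calc ((a+1).factorial * (b+1).factorial)^2 = ((a+1).factorial * (a+1).factorial) * ((b+1).factorial * (b+1).factorial) := by ring
      _ ≤ (a.factorial * (a+2).factorial) * (b.factorial * (b+2).factorial) := Nat.mul_le_mul (fact_ineq a) (fact_ineq b)
      _ = ((a+2).factorial * b.factorial) * (a.factorial * (b+2).factorial) := by ring
  calc ((a+1).descFactorial a * (b+1).descFactorial b)^2
      = ((a+1).factorial * (b+1).factorial)^2 := by rw [h1, h3]
    _ ≤ ((a+2).factorial * b.factorial) * (a.factorial * (b+2).factorial) := key
    _ = (2 * (a+2).descFactorial a * b.factorial) * (a.factorial * (2 * (b+2).descFactorial b)) := by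
        rw [h2, h4]
    _ = 4 * ((a+2).descFactorial a * b.descFactorial b) *
        (a.descFactorial a * (b+2).descFactorial b) := by rw [h5, h6]; ring

lemma reflect_lin (c : ℝ) : reflect 1 ((X : ℝ[X]) - C c) = 1 - C c * X := by
  rw [sub_eq_add_neg, reflect_add, ← C_neg, reflect_C, reflect_one_X]
  rw [pow_one, C_neg, sub_eq_add_neg, neg_mul]

lemma reflect_prod_lin (t : Multiset ℝ) :
    reflect (Multiset.card t) ((t.map fun a => (X : ℝ[X]) - C a).prod) =
      (t.map fun a => 1 - C a * X).prod := by
  induction t using Multiset.induction_on with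
  | empty => simp
  | cons a t ih =>
    rw [Multiset.map_cons, Multiset.prod_cons, Multiset.card_cons,
      Multiset.map_cons, Multiset.prod_cons, ← ih]
    have hd : ((t.map fun a => (X : ℝ[X]) - C a).prod).natDegree ≤ Multiset.card t := by
      rw [natDegree_multiset_prod_X_sub_C_eq_card]

    have := reflect_mul ((X : ℝ[X]) - C a) ((t.map fun a => (X : ℝ[X]) - C a).prod)
      (F := 1) (G := Multiset.card t) (by simp [natDegree_X_sub_C]) hd
    rw [show Multiset.card t + 1 = 1 + Multiset.card t by omega, this, reflect_lin]

lemma newton_weak {s : Finset ι} {μ : ι → ℝ} {k : ℕ} (hk2 : 2 ≤ k) (hkm : k ≤ s.card)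
    (h2nn : 0 ≤ Esum s (k-2) μ) (h0pos : 0 < Esum s k μ) :
    Esum s k μ * Esum s (k-2) μ ≤ (Esum s (k-1) μ)^2 := by
  classical
  set m := s.card with hm
  set p : ℝ[X] := ∏ j ∈ s, (X + C (μ j)) with hp
  have hmonic : ∀ j ∈ s, (X + C (μ j)).Monic := fun j _ => monic_X_add_C _
  have hpne : p ≠ 0 := (monic_prod_of_monic s _ hmonic).ne_zero
  have hpdeg : p.natDegree = m := by
    rw [hp, natDegree_prod_of_monic _ _ hmonic]
    simp [natDegree_X_add_C, hm]
  have hproots : (p.roots).card = m := by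
    rw [hp, roots_prod _ _ (hp ▸ hpne), Multiset.card_bind]
    have hfn : ∀ j ∈ s.val, Multiset.card ((X + C (μ j)).roots) = 1 := by
      intro j _
      rw [show (X + C (μ j)) = X - C (-(μ j)) by rw [map_neg, sub_neg_eq_add],
        roots_X_sub_C]
      simp
    calc (Multiset.map (Multiset.card ∘ fun i => (X + C (μ i)).roots) s.val).sum
        = (Multiset.map (fun _ => (1:ℕ)) s.val).sum := by
          apply congrArg
          exact Multiset.map_congr rfl hfn
      _ = m := by
          rw [Multiset.map_const', Multiset.sum_replicate, smul_eq_mul, mul_one]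
          rfl
  have hcoeff : ∀ d, d ≤ m → p.coeff d = Esum s (m - d) μ := by
    intro d hd
    rw [hp, Finset.prod_X_add_C_coeff _ _ hd]
    rfl
  -- q1 : the (m-k)-th derivative
  set q1 : ℝ[X] := derivative^[m - k] p with hq1
  have hit := iterRR (hpdeg ▸ hproots) (m - k) (by omega)
  rw [← hq1] at hit
  have hup : q1.natDegree ≤ k := by
    have h := natDegree_iterate_derivative p (m - k)
    rw [← hq1] at h
    omega
  have hq1deg : q1.natDegree = k := by
    have := hit.2
    omega
  have hq1roots : (q1.roots).card = k := hq1deg ▸ hit.1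
  have hq1ne : q1 ≠ 0 := by
    intro h
    rw [h, natDegree_zero] at hq1deg
    omega
  have hq1coeff : ∀ d, d ≤ 2 → q1.coeff d =
      ((d + (m - k)).descFactorial (m - k) : ℝ) * Esum s (k - d) μ := by
    intro d hd
    rw [hq1, coeff_iterate_derivative, nsmul_eq_mul, hcoeff _ (by omega),
      show m - (d + (m - k)) = k - d by omega]
  have hdfpos : ∀ {n j : ℕ}, j ≤ n → (0:ℝ) < (n.descFactorial j : ℝ) := by
    intro n j h
    exact_mod_cast Nat.pos_of_ne_zero
      (fun h0 => absurd (Nat.descFactorial_eq_zero_iff_lt.1 h0) (by omega))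
  have hq10 : q1.coeff 0 ≠ 0 := by
    rw [hq1coeff 0 (by omega), show (0 : ℕ) + (m - k) = m - k by omega,
      show k - 0 = k by omega]
    have := hdfpos (le_refl (m - k))
    positivity
  have hq1rne : ∀ a ∈ q1.roots, a ≠ 0 := by
    intro a ha h0
    rw [Polynomial.mem_roots hq1ne] at ha
    rw [h0] at ha
    exact hq10 (by rw [coeff_zero_eq_eval_zero]; exact ha)
  have hsplit : q1 = C q1.leadingCoeff * (q1.roots.map fun a => X - C a).prod :=
    Splits.eq_prod_roots (splits_iff_card_roots.2 (by rw [hq1roots, hq1deg]))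
  set r : ℝ[X] := q1.reverse with hr
  have hrfac : r = C q1.leadingCoeff * (q1.roots.map fun a => 1 - C a * X).prod := by
    rw [hr, reverse, hq1deg]
    conv_lhs => rw [hsplit]
    rw [reflect_C_mul]
    congr 1
    rw [← hq1roots, reflect_prod_lin]
  have hlcne : q1.leadingCoeff ≠ 0 := leadingCoeff_ne_zero.2 hq1ne
  have hrroots : (r.roots).card = k := by
    have hpt : ∀ a ∈ q1.roots, ((1:ℝ[X]) - C a * X) = C (-a) * (X - C a⁻¹) := by
      intro a ha
      have hane : a ≠ 0 := hq1rne a ha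
      have hinv : (-a) * a⁻¹ = -1 := by field_simp
      rw [mul_sub, ← C_mul, hinv]
      simp only [map_neg, C_1]
      ring
    rw [hrfac, Multiset.map_congr rfl hpt, Multiset.prod_map_mul,
      show (Multiset.map (fun a => C (-a)) q1.roots) =
        Multiset.map C (Multiset.map (fun a => -a) q1.roots) by
          rw [Multiset.map_map]; rfl,
      ← map_multiset_prod, ← mul_assoc, ← C_mul]
    have hne2 : q1.leadingCoeff * (Multiset.map (fun a => -a) q1.roots).prod ≠ 0 := by
      refine mul_ne_zero hlcne (Multiset.prod_ne_zero ?_)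
      intro h0
      rw [Multiset.mem_map] at h0
      obtain ⟨a, ha, ha0⟩ := h0
      exact hq1rne a ha (neg_eq_zero.1 ha0)
    rw [roots_C_mul _ hne2,
      show (Multiset.map (fun a => (X:ℝ[X]) - C a⁻¹) q1.roots) =
        Multiset.map (fun b => X - C b) (Multiset.map (fun a => a⁻¹) q1.roots) by
          rw [Multiset.map_map]; rfl,
      roots_multiset_prod_X_sub_C, Multiset.card_map, hq1roots]
  have hrdeg : r.natDegree = k := by
    have h1 : r.natDegree ≤ q1.natDegree := q1.reverse_natDegree_le
    have h2 := r.card_roots'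
    omega
  -- q2 : the (k-2)-th derivative of r, a quadratic with all roots real
  set q2 : ℝ[X] := derivative^[k - 2] r with hq2
  have hit2 := iterRR (hrdeg ▸ hrroots) (k - 2) (by omega)
  rw [← hq2] at hit2
  have hup2 : q2.natDegree ≤ 2 := by
    have h := natDegree_iterate_derivative r (k - 2)
    rw [← hq2] at h
    omega
  have hq2deg : q2.natDegree = 2 := by
    have := hit2.2
    omega
  have hq2roots : (q2.roots).card = 2 := hq2deg ▸ hit2.1
  obtain ⟨x, hx⟩ : ∃ x, x ∈ q2.roots :=
    Multiset.exists_mem_of_ne_zero (by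
      intro h0
      rw [h0] at hq2roots
      simp at hq2roots)
  have hx' := Polynomial.mem_roots'.1 hx
  have heval : q2.coeff 0 + q2.coeff 1 * x + q2.coeff 2 * (x * x) = 0 := by
    have he : q2.eval x = 0 := hx'.2
    rw [eval_eq_sum_range, hq2deg] at he
    rw [Finset.sum_range_succ, Finset.sum_range_succ, Finset.sum_range_succ,
      Finset.sum_range_zero] at he
    linear_combination he
  have hrc : ∀ d, d ≤ 2 → q2.coeff d =
      (((d + (k - 2)).descFactorial (k - 2)) : ℝ) * q1.coeff (2 - d) := by
    intro d hd
    rw [hq2, coeff_iterate_derivative, nsmul_eq_mul]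
    congr 1
    rw [hr, coeff_reverse, hq1deg, revAt_le (by omega : d + (k - 2) ≤ k),
      show k - (d + (k - 2)) = 2 - d by omega]
  have hA : q2.coeff 2 = ((k.descFactorial (k - 2)) : ℝ) *
      (((m - k).descFactorial (m - k) : ℝ) * Esum s k μ) := by
    rw [hrc 2 (le_refl _), show 2 + (k - 2) = k by omega,
      show (2:ℕ) - 2 = 0 by omega, hq1coeff 0 (by omega),
      show (0 : ℕ) + (m - k) = m - k by omega, show k - 0 = k by omega]
  have hB : q2.coeff 1 = (((k - 1).descFactorial (k - 2)) : ℝ) *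
      (((m - k + 1).descFactorial (m - k) : ℝ) * Esum s (k - 1) μ) := by
    rw [hrc 1 (by omega), show 1 + (k - 2) = k - 1 by omega,
      show (2:ℕ) - 1 = 1 by omega, hq1coeff 1 (by omega),
      show (1 : ℕ) + (m - k) = m - k + 1 by omega]
  have hC : q2.coeff 0 = (((k - 2).descFactorial (k - 2)) : ℝ) *
      (((m - k + 2).descFactorial (m - k) : ℝ) * Esum s (k - 2) μ) := by
    rw [hrc 0 (by omega), show 0 + (k - 2) = k - 2 by omega,
      show (2:ℕ) - 0 = 2 by omega, hq1coeff 2 (le_refl _),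
      show (2 : ℕ) + (m - k) = m - k + 2 by omega]
  have hdisc := discrim_eq_sq_of_quadratic_eq_zero
    (a := q2.coeff 2) (b := q2.coeff 1) (c := q2.coeff 0) (x := x)
    (by linear_combination heval)
  have hd0 : 4 * (q2.coeff 2) * (q2.coeff 0) ≤ (q2.coeff 1)^2 := by
    have h1 : discrim (q2.coeff 2) (q2.coeff 1) (q2.coeff 0) =
        (q2.coeff 1)^2 - 4 * (q2.coeff 2) * (q2.coeff 0) := by
      rw [discrim]
    have h2 : (0:ℝ) ≤ (2 * q2.coeff 2 * x + q2.coeff 1)^2 := sq_nonneg _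
    rw [← hdisc, h1] at h2
    linarith
  have hnat := nat_newton_const (k - 2) (m - k)
  rw [show k - 2 + 1 = k - 1 by omega, show k - 2 + 2 = k by omega] at hnat
  have hcast : ((((k-1).descFactorial (k-2)) : ℝ) * (((m-k+1).descFactorial (m-k)) : ℝ))^2 ≤
      4 * (((k.descFactorial (k-2)) : ℝ) * (((m-k).descFactorial (m-k)) : ℝ)) *
        ((((k-2).descFactorial (k-2)) : ℝ) * (((m-k+2).descFactorial (m-k)) : ℝ)) := by
    exact_mod_cast hnat
  set a0 := Esum s k μ
  set a1 := Esum s (k - 1) μ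
  set a2 := Esum s (k - 2) μ
  set u : ℝ := ((k-1).descFactorial (k-2) : ℝ) with hu
  set v : ℝ := ((m-k+1).descFactorial (m-k) : ℝ) with hv
  set w : ℝ := ((m-k).descFactorial (m-k) : ℝ)
  set z : ℝ := ((m-k+2).descFactorial (m-k) : ℝ)
  set kD : ℝ := (k.descFactorial (k-2) : ℝ)
  set k2D : ℝ := ((k-2).descFactorial (k-2) : ℝ)
  rw [hA, hB, hC] at hd0
  have h1 : (u*v)^2 * (a0*a2) ≤ (4*(kD*w)*(k2D*z)) * (a0*a2) :=
    mul_le_mul_of_nonneg_right hcast (mul_nonneg h0pos.le h2nn)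
  have h2 : (4*(kD*w)*(k2D*z)) * (a0*a2) ≤ (u*v)^2 * a1^2 := by nlinarith [hd0]
  have huv : (0:ℝ) < (u*v)^2 := by
    have h3 := hdfpos (show k - 2 ≤ k - 1 by omega)
    have h4 := hdfpos (show m - k ≤ m - k + 1 by omega)
    rw [← hu] at h3
    rw [← hv] at h4
    positivity
  exact (mul_le_mul_iff_right₀ huv).1 (le_trans h1 h2)

lemma key_pos : ∀ (k : ℕ), 1 ≤ k → ∀ (s : Finset ι) (μ : ι → ℝ),
    (∀ j, 1 ≤ j → j ≤ k → 0 < Esum s j μ) → ∀ i ∈ s, 0 < Esum (s.erase i) (k-1) μ := by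
  intro k
  induction k using Nat.strong_induction_on with
  | _ k IH =>
    intro hk1 s μ hpos i hi
    rcases Nat.lt_or_ge k 2 with hk2 | hk2
    · -- k = 1
      have : k - 1 = 0 := by omega
      rw [this, Esum_zero]
      exact one_pos
    by_cases hμi : μ i ≤ 0
    · exact ((Esum_erase_nonpos hi hμi hpos) (k-1) (by omega)).2
    push_neg at hμi
    by_contra hneg
    push_neg at hneg
    set t := s.erase i with ht
    have ha2 : 0 < Esum t (k-2) μ := by
      have := IH (k-1) (by omega) (by omega) s μ
        (fun j h1 h2 => hpos j h1 (by omega)) i hi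
      rwa [show k-1-1 = k-2 by omega] at this
    have hrec1 : Esum s k μ = μ i * Esum t (k-1) μ + Esum t k μ := by
      have := Esum_recur hi (k-1) μ
      rwa [show k-1+1 = k by omega] at this
    have hrec2 : Esum s (k-1) μ = μ i * Esum t (k-2) μ + Esum t (k-1) μ := by
      have := Esum_recur hi (k-2) μ
      rwa [show k-2+1 = k-1 by omega] at this
    have hsk : 0 < Esum s k μ := hpos k hk1 (le_refl k)
    have hsk1 : 0 < Esum s (k-1) μ := hpos (k-1) (by omega) (by omega)
    have hak : 0 < Esum t k μ := by nlinarith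
    have hcard : k ≤ t.card := by
      by_contra hc
      rw [Esum_of_card_lt (by omega) μ] at hak
      exact lt_irrefl 0 hak
    have hnewton := newton_weak hk2 hcard ha2.le hak
    -- μ i * a_{k-2} > -a_{k-1} ≥ 0 and a_k > μ i * (-a_{k-1}) give a_k a_{k-2} > a_{k-1}^2
    have h5 : μ i * Esum t (k-2) μ > - Esum t (k-1) μ := by nlinarith
    have h6 : Esum t k μ > μ i * (- Esum t (k-1) μ) := by nlinarith
    nlinarith [mul_lt_mul_of_pos_right h6 ha2,
      mul_le_mul_of_nonneg_left h5.le (neg_nonneg.2 hneg)]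

lemma Esum_congr {s : Finset ι} {k : ℕ} {μ ν : ι → ℝ} (h : ∀ j ∈ s, μ j = ν j) :
    Esum s k μ = Esum s k ν := by
  refine Finset.sum_congr rfl fun t ht => Finset.prod_congr rfl fun j hj => ?_
  rw [Finset.mem_powersetCard] at ht
  exact h j (ht.1 hj)


end Aux

/-- On Γ⁺ₖ, ∂σ_k(λ)/∂λᵢ = σ_{k-1}(Λᵢ) > 0: σ_k is strictly increasing in each
variable. -/
theorem esymm_partial_pos (n k : ℕ) (hk1 : 1 ≤ k) (hkn : k ≤ n)
    (lam : Fin n → ℝ) (hlam : lam ∈ gammaPlus n k) (i : Fin n) :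
    fderiv ℝ (esymm n k) lam (Pi.single i 1) = esymmErase n (k - 1) i lam ∧
      0 < esymmErase n (k - 1) i lam := by
  have hEe : ∀ (j : ℕ) (μ : Fin n → ℝ), esymmErase n j i μ = Esum (univ.erase i) j μ :=
    fun _ _ => rfl
  have hE : ∀ (j : ℕ) (μ : Fin n → ℝ), esymm n j μ = Esum univ j μ := fun _ _ => rfl
  -- positivity
  have hpos : 0 < esymmErase n (k-1) i lam := by
    rw [hEe]
    exact key_pos k hk1 univ lam (fun j h1 h2 => hE j lam ▸ hlam j h1 h2) i (mem_univ i)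
  refine ⟨?_, hpos⟩
  -- the affine identity along the i-th coordinate direction
  have hiden : ∀ c : ℝ, esymm n k (lam + c • (Pi.single i 1 : Fin n → ℝ))
      = esymm n k lam + c * esymmErase n (k-1) i lam := by
    intro c
    set ν : Fin n → ℝ := lam + c • (Pi.single i 1 : Fin n → ℝ) with hν
    have hνi : ν i = lam i + c := by simp [hν]
    have hνj : ∀ j ∈ univ.erase i, ν j = lam j := by
      intro j hj
      have hji : j ≠ i := (Finset.mem_erase.1 hj).1
      simp [hν, Pi.single_eq_of_ne hji]
    have h1 : esymm n k ν = ν i * Esum (univ.erase i) (k-1) ν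
        + Esum (univ.erase i) k ν := by
      rw [hE, show k = (k-1)+1 by omega, Esum_recur (mem_univ i) (k-1) ν,
        show (k-1)+1 = k by omega]
    have h2 : esymm n k lam = lam i * Esum (univ.erase i) (k-1) lam
        + Esum (univ.erase i) k lam := by
      rw [hE, show k = (k-1)+1 by omega, Esum_recur (mem_univ i) (k-1) lam,
        show (k-1)+1 = k by omega]
    rw [h1, h2, hνi, Esum_congr (k := k-1) hνj, Esum_congr (k := k) hνj, hEe]
    ring
  -- differentiability of esymm
  have hdiff : DifferentiableAt ℝ (esymm n k) lam := by
    apply DifferentiableAt.fun_sum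
    intro t ht
    have := (HasFDerivAt.finset_prod (u := t)
      (g := fun j (y : Fin n → ℝ) => y j)
      (g' := fun j => (ContinuousLinearMap.proj j : (Fin n → ℝ) →L[ℝ] ℝ))
      (x := lam)
      (fun j _ => (ContinuousLinearMap.proj j :
        (Fin n → ℝ) →L[ℝ] ℝ).hasFDerivAt)).differentiableAt
    exact this
  -- compute the directional derivative two ways
  have hcurve : HasDerivAt (fun c : ℝ => lam + c • (Pi.single i 1 : Fin n → ℝ)) (Pi.single i 1) 0 := by
    have h := ((hasDerivAt_id (0:ℝ)).smul_const (Pi.single i 1 : Fin n → ℝ)).const_add lam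
    simpa using h
  have hcomp : HasDerivAt (fun c : ℝ => esymm n k (lam + c • (Pi.single i 1 : Fin n → ℝ)))
      (fderiv ℝ (esymm n k) lam (Pi.single i 1)) 0 := by
    have h0 : lam = lam + (0:ℝ) • (Pi.single i 1 : Fin n → ℝ) := by simp
    have := hdiff.hasFDerivAt.comp_hasDerivAt_of_eq 0 hcurve h0
    exact this
  have hlin : HasDerivAt (fun c : ℝ => esymm n k (lam + c • (Pi.single i 1 : Fin n → ℝ)))
      (esymmErase n (k-1) i lam) 0 := by
    have h := ((hasDerivAt_mul_const (x := (0:ℝ)) (esymmErase n (k-1) i lam)).const_add (esymm n k lam))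
    have heq : (fun c : ℝ => esymm n k lam + c * esymmErase n (k-1) i lam)
        = fun c : ℝ => esymm n k (lam + c • (Pi.single i 1 : Fin n → ℝ)) := by
      funext c
      rw [hiden c]
    rw [heq] at h
    exact h
  exact hcomp.unique hlin
end
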